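/- arXiv:1105.0675 — 9 statements merged into one kernel-verified Lean document; each statement's English description precedes it below -/
import Mathlib

section
/- Let P and P₀ be orthogonal projectors on a finite-dimensional complex Hilbert space. Then ‖P - P₀‖ < 1 if and only if no nonzero vector in the range of P is orthogonal to the range of P₀ and no nonzero vector in the range of P₀ is orthogonal to the range of P. -/
/-!
Put `A = P - P₀` and `B = 1 - P - P₀`. For projections `A² + B² = 1`, and both are self-adjoint,
so `‖A x‖² + ‖B x‖² = ‖x‖²`. The operator norm is attained on the compact unit ball, hence
`‖A‖ < 1` exactly when `‖A x‖ < ‖x‖` for all `x ≠ 0`, i.e. when `B` is injective.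
If `B x = 0` then `x = P x + P₀ x` and `P₀ (P x) = 0`, so either `P x ≠ 0` lies in `ran P` and is
orthogonal to `ran P₀`, or `x = P₀ x` is orthogonal to `ran P`; conversely such vectors lie in
`ker B`.
-/

open ContinuousLinearMap

theorem IsIdempotentElem.sub_mul_self_add_one_sub_sub_mul_self {R : Type*} [Ring R] {p q : R}
    (hp : IsIdempotentElem p) (hq : IsIdempotentElem q) :
    (p - q) * (p - q) + (1 - p - q) * (1 - p - q) = 1 := by
  simp only [sub_mul, mul_sub, one_mul, mul_one, hp.eq, hq.eq]
  abel

namespace ContinuousLinearMap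

section ProperSpace

variable {𝕜 E F : Type*} [DenselyNormedField 𝕜] [NormedAddCommGroup E] [NormedSpace 𝕜 E]
  [ProperSpace E] [SeminormedAddCommGroup F] [NormedSpace 𝕜 F]

theorem exists_norm_le_one_and_norm_apply_eq_opNorm (f : E →L[𝕜] F) :
    ∃ x, ‖x‖ ≤ 1 ∧ ‖f x‖ = ‖f‖ := by
  obtain ⟨x, hx, hsup⟩ := (isCompact_closedBall (0 : E) 1).exists_sSup_image_eq
    (Metric.nonempty_closedBall.mpr zero_le_one) f.continuous.norm.continuousOn
  exact ⟨x, mem_closedBall_zero_iff.mp hx, by rw [← hsup, sSup_unitClosedBall_eq_norm]⟩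

theorem opNorm_lt_one_iff (f : E →L[𝕜] F) : ‖f‖ < 1 ↔ ∀ x ≠ 0, ‖f x‖ < ‖x‖ := by
  refine ⟨fun hf x hx => ?_, fun hf => ?_⟩
  · calc ‖f x‖ ≤ ‖f‖ * ‖x‖ := f.le_opNorm x
      _ < 1 * ‖x‖ := by gcongr
      _ = ‖x‖ := one_mul _
  · obtain ⟨x, hx, hfx⟩ := f.exists_norm_le_one_and_norm_apply_eq_opNorm
    rcases eq_or_ne x 0 with rfl | hx0
    · simp [← hfx]
    · exact hfx ▸ (hf x hx0).trans_le hx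

end ProperSpace

section Idempotent

variable {R M : Type*} [Ring R] [TopologicalSpace M] [AddCommGroup M] [Module R M]
  [IsTopologicalAddGroup M] {P Q : M →L[R] M}

theorem injective_one_sub_sub_iff (hP : IsIdempotentElem P) (hQ : IsIdempotentElem Q) :
    Function.Injective ⇑(1 - P - Q) ↔
      (∀ v, P v = v → v ≠ 0 → Q v ≠ 0) ∧ (∀ v, Q v = v → v ≠ 0 → P v ≠ 0) := by
  have hPP (x : M) : P (P x) = P x := congr($hP.eq x)
  have hQQ (x : M) : Q (Q x) = Q x := congr($hQ.eq x)
  rw [injective_iff_map_eq_zero]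
  refine ⟨fun h => ⟨fun v hPv hv hQv => hv (h v ?_), fun v hQv hv hPv => hv (h v ?_)⟩, ?_⟩
  · simp [hPv, hQv]
  · simp [hPv, hQv]
  rintro ⟨hPQ, hQP⟩ x hx
  rw [sub_apply, sub_apply, one_apply_eq_self, sub_sub, sub_eq_zero] at hx
  have hQPx : Q (P x) = 0 := by
    have := congrArg Q hx
    rwa [map_add, hQQ, right_eq_add] at this
  by_contra hx0
  rcases eq_or_ne (P x) 0 with hPx | hPx
  · exact hQP x (by rw [hx, hPx, zero_add, hQQ]) hx0 hPx
  · exact hPQ (P x) (hPP x) hPx hQPx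

end Idempotent

section InnerProductSpace

variable {𝕜 E : Type*} [RCLike 𝕜] [NormedAddCommGroup E] [InnerProductSpace 𝕜 E]

theorem norm_sq_apply_add_norm_sq_apply_of_star_mul_self_add [CompleteSpace E] {T S : E →L[𝕜] E}
    (h : star T * T + star S * S = 1) (x : E) :
    ‖T x‖ ^ 2 + ‖S x‖ ^ 2 = ‖x‖ ^ 2 := by
  rw [apply_norm_sq_eq_inner_adjoint_left, apply_norm_sq_eq_inner_adjoint_left, ← map_add,
    ← inner_add_left, ← add_apply, ← star_eq_adjoint, ← star_eq_adjoint, ← mul_def, ← mul_def, h,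
    one_apply_eq_self, inner_self_eq_norm_sq]

variable {P Q : E →L[𝕜] E}

theorem norm_sq_sub_apply_add_norm_sq_one_sub_sub_apply [CompleteSpace E]
    (hP : IsStarProjection P) (hQ : IsStarProjection Q) (x : E) :
    ‖(P - Q) x‖ ^ 2 + ‖(1 - P - Q) x‖ ^ 2 = ‖x‖ ^ 2 := by
  refine norm_sq_apply_add_norm_sq_apply_of_star_mul_self_add ?_ x
  rw [(hP.isSelfAdjoint.sub hQ.isSelfAdjoint).star_eq,
    (hP.one_sub.isSelfAdjoint.sub hQ.isSelfAdjoint).star_eq]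
  exact hP.isIdempotentElem.sub_mul_self_add_one_sub_sub_mul_self hQ.isIdempotentElem

theorem norm_sub_apply_lt_iff [CompleteSpace E] (hP : IsStarProjection P)
    (hQ : IsStarProjection Q) (x : E) :
    ‖(P - Q) x‖ < ‖x‖ ↔ (1 - P - Q) x ≠ 0 := by
  rw [← pow_lt_pow_iff_left₀ (norm_nonneg _) (norm_nonneg _) two_ne_zero,
    ← norm_sq_sub_apply_add_norm_sq_one_sub_sub_apply hP hQ x, lt_add_iff_pos_right, sq_pos_iff,
    norm_ne_zero_iff]

theorem norm_sub_lt_one_iff_injective [ProperSpace E] (hP : IsStarProjection P)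
    (hQ : IsStarProjection Q) :
    ‖P - Q‖ < 1 ↔ Function.Injective ⇑(1 - P - Q) := by
  simp only [opNorm_lt_one_iff, norm_sub_apply_lt_iff hP hQ, injective_iff_map_eq_zero,
    not_imp_not]

end InnerProductSpace

end ContinuousLinearMap

theorem stmt0 {H : Type*} [NormedAddCommGroup H] [InnerProductSpace ℂ H]
    [FiniteDimensional ℂ H]
    (P P₀ : H →L[ℂ] H)
    (hP : ContinuousLinearMap.adjoint P = P) (hPidem : P ∘L P = P)
    (hP₀ : ContinuousLinearMap.adjoint P₀ = P₀) (hP₀idem : P₀ ∘L P₀ = P₀) :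
    ‖P - P₀‖ < 1 ↔
      ((∀ v : H, P v = v → v ≠ 0 → P₀ v ≠ 0) ∧
       (∀ v : H, P₀ v = v → v ≠ 0 → P v ≠ 0)) := by
  have hPstar : IsStarProjection P := ⟨hPidem, by rw [IsSelfAdjoint, star_eq_adjoint, hP]⟩
  have hP₀star : IsStarProjection P₀ := ⟨hP₀idem, by rw [IsSelfAdjoint, star_eq_adjoint, hP₀]⟩
  rw [norm_sub_lt_one_iff_injective hPstar hP₀star, injective_one_sub_sub_iff hPidem hP₀idem]
end

section
/- Let ψ and φ be unit vectors in ℂ² with real positive inner product ⟨ψ, φ⟩ = cos θ for some θ ∈ [0, π/2). Let R_ψ = I - 2|ψ⟩⟨ψ| and R_φ = I - 2|φ⟩⟨φ| be the corresponding reflections. Then the double reflection R_φ R_ψ is unitary and has no eigenvalue on the negative real axis. -/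
/-!
A reflection `R_v = I - 2|v⟩⟨v|` in a unit vector is a self-adjoint involution, hence unitary, so
`R_φ R_ψ` is unitary and a real negative eigenvalue can only be `-1`. But `R_φ R_ψ x = -x` means
`R_ψ x = -R_φ x`, i.e. `x = ⟨ψ, x⟩ ψ + ⟨φ, x⟩ φ`; pairing with `ψ` and with `φ` forces
`⟨φ, x⟩ ⟨ψ, φ⟩ = 0` and `⟨ψ, x⟩ ⟨φ, ψ⟩ = 0`, and `⟨ψ, φ⟩ = cos θ ≠ 0` gives `x = 0`.
-/

open ContinuousLinearMap
open scoped ComplexInnerProductSpace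

section

variable {𝕜 E : Type*} [RCLike 𝕜] [NormedAddCommGroup E] [InnerProductSpace 𝕜 E]

theorem norm_eq_one_of_mem_unitary_of_apply_eq_smul [CompleteSpace E] {u : E →L[𝕜] E}
    (hu : u ∈ unitary (E →L[𝕜] E)) {x : E} (hx : x ≠ 0) {c : 𝕜} (h : u x = c • x) :
    ‖c‖ = 1 := by
  have := norm_map_of_mem_unitary hu x
  rw [h, norm_smul] at this
  exact mul_eq_right₀ (norm_ne_zero_iff.mpr hx) |>.mp this

variable {v : E} {R : E →L[𝕜] E}

theorem isSelfAdjoint_of_reflection_apply [CompleteSpace E]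
    (hR : ∀ x, R x = x - (2 : 𝕜) • (inner 𝕜 v x • v)) : IsSelfAdjoint R := by
  rw [isSelfAdjoint_iff', eq_comm, eq_adjoint_iff]
  intro x y
  simp only [hR, inner_sub_left, inner_sub_right, inner_smul_left, inner_smul_right, map_ofNat,
    inner_conj_symm]
  ring

theorem reflection_apply_reflection_apply (hv : ‖v‖ = 1)
    (hR : ∀ x, R x = x - (2 : 𝕜) • (inner 𝕜 v x • v)) (x : E) : R (R x) = x := by
  rw [hR (R x), hR x]
  simp only [inner_sub_right, inner_smul_right, inner_self_eq_one_of_norm_eq_one hv, mul_one]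
  module

theorem mem_unitary_of_reflection_apply [CompleteSpace E] (hv : ‖v‖ = 1)
    (hR : ∀ x, R x = x - (2 : 𝕜) • (inner 𝕜 v x • v)) : R ∈ unitary (E →L[𝕜] E) := by
  have hRR : R * R = 1 := ext (reflection_apply_reflection_apply hv hR)
  rw [Unitary.mem_iff, (isSelfAdjoint_of_reflection_apply hR).star_eq]
  exact ⟨hRR, hRR⟩

theorem eq_zero_of_reflection_apply_reflection_apply_eq_neg {ψ φ x : E} {Rψ Rφ : E →L[𝕜] E}
    (hψ : ‖ψ‖ = 1) (hφ : ‖φ‖ = 1) (hψφ : inner 𝕜 ψ φ ≠ 0)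
    (hRψ : ∀ x, Rψ x = x - (2 : 𝕜) • (inner 𝕜 ψ x • ψ))
    (hRφ : ∀ x, Rφ x = x - (2 : 𝕜) • (inner 𝕜 φ x • φ))
    (hx : Rφ (Rψ x) = -x) : x = 0 := by
  set a := inner 𝕜 ψ x with ha_def
  set b := inner 𝕜 φ x with hb_def
  have hRψ_eq : Rψ x = -Rφ x := by
    rw [← reflection_apply_reflection_apply hφ hRφ (Rψ x), hx, map_neg]
  have hx_span : x = a • ψ + b • φ := by
    rw [hRψ, hRφ] at hRψ_eq
    apply smul_right_injective E (two_ne_zero (α := 𝕜))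
    linear_combination (norm := module) hRψ_eq
  have ha_eq := congrArg (inner 𝕜 ψ) hx_span
  have hb_eq := congrArg (inner 𝕜 φ) hx_span
  simp only [inner_add_right, inner_smul_right, inner_self_eq_one_of_norm_eq_one hψ,
    inner_self_eq_one_of_norm_eq_one hφ, mul_one, ← ha_def, ← hb_def]
    at ha_eq hb_eq
  have hb : b = 0 := (mul_eq_zero.mp (left_eq_add.mp ha_eq)).resolve_right hψφ
  have ha : a = 0 :=
    (mul_eq_zero.mp (right_eq_add.mp hb_eq)).resolve_right (mt inner_eq_zero_symm.mp hψφ)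
  rw [hx_span, ha, hb, zero_smul, zero_smul, add_zero]

end

theorem stmt3
    (ψ φ : EuclideanSpace ℂ (Fin 2)) (hψ : ‖ψ‖ = 1) (hφ : ‖φ‖ = 1)
    (θ : ℝ) (hθ : 0 ≤ θ ∧ θ < Real.pi / 2)
    (hinner : ⟪ψ, φ⟫ = (Real.cos θ : ℂ))
    (Rψ Rφ : EuclideanSpace ℂ (Fin 2) →L[ℂ] EuclideanSpace ℂ (Fin 2))
    (hRψ : ∀ x, Rψ x = x - (2 : ℂ) • (⟪ψ, x⟫ • ψ))
    (hRφ : ∀ x, Rφ x = x - (2 : ℂ) • (⟪φ, x⟫ • φ)) :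
    (ContinuousLinearMap.adjoint (Rφ ∘L Rψ) ∘L (Rφ ∘L Rψ) = 1 ∧
     (Rφ ∘L Rψ) ∘L ContinuousLinearMap.adjoint (Rφ ∘L Rψ) = 1) ∧
    ∀ (lam : ℂ) (x : EuclideanSpace ℂ (Fin 2)), x ≠ 0 → (Rφ ∘L Rψ) x = lam • x →
      ¬ (lam.im = 0 ∧ lam.re < 0) := by
  have hU : Rφ * Rψ ∈ unitary (EuclideanSpace ℂ (Fin 2) →L[ℂ] EuclideanSpace ℂ (Fin 2)) :=
    mul_mem (mem_unitary_of_reflection_apply hφ hRφ) (mem_unitary_of_reflection_apply hψ hRψ)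
  refine ⟨by simpa only [star_eq_adjoint, mul_def] using Unitary.mem_iff.mp hU, ?_⟩
  rintro lam x hx hlam ⟨him, hre⟩
  have hnorm : ‖lam‖ = 1 := norm_eq_one_of_mem_unitary_of_apply_eq_smul hU hx hlam
  have hlam_eq : lam = -1 := by
    rw [← Complex.abs_re_eq_norm.mpr him, abs_of_neg hre] at hnorm
    exact Complex.ext (by rw [Complex.neg_re, Complex.one_re]; linarith) (by simp [him])
  have hcos : ⟪ψ, φ⟫ ≠ 0 := by
    rw [hinner, Complex.ofReal_ne_zero]
    exact (Real.cos_pos_of_mem_Ioo ⟨by linarith [Real.pi_pos], hθ.2⟩).ne'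
  refine hx (eq_zero_of_reflection_apply_reflection_apply_eq_neg hψ hφ hcos hRψ hRφ ?_)
  simpa [hlam_eq] using hlam
end

section
/- Let ψ and φ be non-orthogonal unit vectors in a finite-dimensional complex Hilbert space with ⟨ψ, φ⟩ real and positive. Then there exists a unitary U with U² = R_φ R_ψ (where R_v = I - 2|v⟩⟨v|) and U ψ = φ. -/
open ContinuousLinearMap
open scoped ComplexInnerProductSpace

/-!
Let `R_v` be the reflection in `vᗮ` and `χ = ψ + φ`. Because `‖ψ‖ = ‖φ‖` and `⟪ψ, φ⟫` is real,
`χ ⟂ ψ - φ`, so `R_χ ψ = -φ`; hence `R_χ R_ψ R_χ = R_{R_χ ψ} = R_φ`. The unitary `U = R_χ R_ψ`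
therefore satisfies `U² = R_χ R_ψ R_χ R_ψ = R_φ R_ψ` and `U ψ = R_χ (-ψ) = φ`.
-/

open Submodule
open scoped InnerProductSpace

section

variable {𝕜 E : Type*} [RCLike 𝕜] [NormedAddCommGroup E] [InnerProductSpace 𝕜 E]

theorem Submodule.reflection_orthogonal_singleton_apply {v : E} (hv : ‖v‖ = 1) (x : E) :
    reflection (𝕜 ∙ v)ᗮ x = x - (2 : 𝕜) • (⟪v, x⟫_𝕜 • v) := by
  rw [reflection_orthogonal_apply, reflection_singleton_apply, hv]
  simp only [RCLike.ofReal_one, one_pow, div_one, ofNat_smul_eq_nsmul]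
  abel

theorem Submodule.reflection_orthogonal_singleton_neg (v : E) :
    reflection (𝕜 ∙ -v)ᗮ = reflection (𝕜 ∙ v)ᗮ := by
  simp only [← Set.neg_singleton, span_neg]

theorem Submodule.reflection_orthogonal_singleton_map_apply (f : E ≃ₗᵢ[𝕜] E) (v x : E) :
    reflection (𝕜 ∙ f v)ᗮ x = f (reflection (𝕜 ∙ v)ᗮ (f.symm x)) := by
  have : (𝕜 ∙ f v)ᗮ = (𝕜 ∙ v)ᗮ.map (f.toLinearEquiv : E →ₗ[𝕜] E) := by
    rw [map_orthogonal_equiv, map_span, Set.image_singleton]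
    rfl
  simp only [this, reflection_map_apply]

theorem Submodule.reflection_orthogonal_add_apply {v w : E} (hn : ‖v‖ = ‖w‖)
    (hi : ⟪v, w⟫_𝕜 = ⟪w, v⟫_𝕜) : reflection (𝕜 ∙ (v + w))ᗮ v = -w := by
  set R := reflection (𝕜 ∙ (v + w))ᗮ
  have hadd : R (v + w) = -(v + w) := reflection_orthogonalComplement_singleton_eq_neg (v + w)
  have hsub : R (v - w) = v - w := by
    apply reflection_mem_subspace_eq_self
    rw [mem_orthogonal_singleton_iff_inner_right, inner_add_left, inner_sub_right,
      inner_sub_right, hi, inner_self_eq_norm_sq_to_K, inner_self_eq_norm_sq_to_K, hn]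
    ring
  rw [map_add] at hadd
  rw [map_sub] at hsub
  have : (2 : 𝕜) • R v = (2 : 𝕜) • -w := by
    linear_combination (norm := module) hadd + hsub
  exact smul_right_injective E two_ne_zero this

variable {F : Type*} [NormedAddCommGroup F] [InnerProductSpace 𝕜 F] [CompleteSpace E]
  [CompleteSpace F]

theorem LinearIsometryEquiv.adjoint_comp_self (e : E ≃ₗᵢ[𝕜] F) :
    adjoint (e : E →L[𝕜] F) ∘L (e : E →L[𝕜] F) = 1 := by
  ext x
  simp [e.adjoint_eq_symm]

theorem LinearIsometryEquiv.comp_adjoint (e : E ≃ₗᵢ[𝕜] F) :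
    (e : E →L[𝕜] F) ∘L adjoint (e : E →L[𝕜] F) = 1 := by
  ext x
  simp [e.adjoint_eq_symm]

end

section DirectRotation

variable (𝕜 : Type*) {E : Type*} [RCLike 𝕜] [NormedAddCommGroup E] [InnerProductSpace 𝕜 E]

noncomputable def directRotation (ψ φ : E) : E ≃ₗᵢ[𝕜] E :=
  (reflection (𝕜 ∙ ψ)ᗮ).trans (reflection (𝕜 ∙ (ψ + φ))ᗮ)

variable {𝕜} {ψ φ : E}

theorem directRotation_apply_self (hn : ‖ψ‖ = ‖φ‖) (hi : ⟪ψ, φ⟫_𝕜 = ⟪φ, ψ⟫_𝕜) :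
    directRotation 𝕜 ψ φ ψ = φ := by
  simp only [directRotation, LinearIsometryEquiv.trans_apply,
    reflection_orthogonalComplement_singleton_eq_neg, map_neg,
    reflection_orthogonal_add_apply hn hi, neg_neg]

theorem directRotation_directRotation_apply (hn : ‖ψ‖ = ‖φ‖) (hi : ⟪ψ, φ⟫_𝕜 = ⟪φ, ψ⟫_𝕜)
    (x : E) :
    directRotation 𝕜 ψ φ (directRotation 𝕜 ψ φ x) =
      reflection (𝕜 ∙ φ)ᗮ (reflection (𝕜 ∙ ψ)ᗮ x) := by
  rw [← reflection_orthogonal_singleton_neg φ, ← reflection_orthogonal_add_apply hn hi,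
    reflection_orthogonal_singleton_map_apply, reflection_symm]
  rfl

end DirectRotation

theorem stmt4_general {H : Type*} [NormedAddCommGroup H] [InnerProductSpace ℂ H]
    [FiniteDimensional ℂ H]
    (ψ φ : H) (hψ : ‖ψ‖ = 1) (hφ : ‖φ‖ = 1)
    (him : (⟪ψ, φ⟫ : ℂ).im = 0)
    (Rψ Rφ : H →L[ℂ] H)
    (hRψ : ∀ x, Rψ x = x - (2 : ℂ) • ((⟪ψ, x⟫ : ℂ) • ψ))
    (hRφ : ∀ x, Rφ x = x - (2 : ℂ) • ((⟪φ, x⟫ : ℂ) • φ)) :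
    ∃ U : H →L[ℂ] H,
      ContinuousLinearMap.adjoint U ∘L U = 1 ∧
      U ∘L ContinuousLinearMap.adjoint U = 1 ∧
      U ∘L U = Rφ ∘L Rψ ∧
      U ψ = φ := by
  have hn : ‖ψ‖ = ‖φ‖ := hψ.trans hφ.symm
  have hi : (⟪ψ, φ⟫ : ℂ) = ⟪φ, ψ⟫ := by
    rw [← inner_conj_symm φ ψ, Complex.conj_eq_iff_im.mpr him]
  set U := directRotation ℂ ψ φ
  refine ⟨U, U.adjoint_comp_self, U.comp_adjoint, ?_, directRotation_apply_self hn hi⟩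
  ext x
  rw [comp_apply, comp_apply, hRψ, hRφ, ← reflection_orthogonal_singleton_apply hψ,
    ← reflection_orthogonal_singleton_apply hφ]
  exact directRotation_directRotation_apply hn hi x

theorem stmt4 {H : Type*} [NormedAddCommGroup H] [InnerProductSpace ℂ H]
    [FiniteDimensional ℂ H]
    (ψ φ : H) (hψ : ‖ψ‖ = 1) (hφ : ‖φ‖ = 1)
    (hre : 0 < (⟪ψ, φ⟫ : ℂ).re) (him : (⟪ψ, φ⟫ : ℂ).im = 0)
    (Rψ Rφ : H →L[ℂ] H)
    (hRψ : ∀ x, Rψ x = x - (2 : ℂ) • ((⟪ψ, x⟫ : ℂ) • ψ))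
    (hRφ : ∀ x, Rφ x = x - (2 : ℂ) • ((⟪φ, x⟫ : ℂ) • φ)) :
    ∃ U : H →L[ℂ] H,
      ContinuousLinearMap.adjoint U ∘L U = 1 ∧
      U ∘L ContinuousLinearMap.adjoint U = 1 ∧
      U ∘L U = Rφ ∘L Rψ ∧
      U ψ = φ :=
  stmt4_general ψ φ hψ hφ him Rψ Rφ hRψ hRφ
end

section
/- Let ψ, φ be non-orthogonal unit vectors in a finite-dimensional complex Hilbert space with ⟨ψ, φ⟩ > 0 real. Then there exists an anti-Hermitian operator S with ‖S‖ < π/2 such that exp(S) ψ = φ, and S satisfies PSP = 0, P₀SP₀ = 0, (I-P)S(I-P) = 0, (I-P₀)S(I-P₀) = 0, where P = |ψ⟩⟨ψ| and P₀ = |φ⟩⟨φ|. -/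
/-!
Put θ = arccos ⟪ψ, φ⟫ ∈ [0, π/2) and write φ = cos θ • ψ + sin θ • χ with χ a unit vector orthogonal
to ψ (if θ = 0 then φ = ψ and S = 0 works). The generator G = |χ⟩⟨ψ| - |ψ⟩⟨χ| of the rotations of
the plane spanned by ψ and χ is anti-Hermitian, has norm at most 1, and satisfies G² ψ = -ψ, so
S = θ • G has ‖S‖ ≤ θ and exp(S) ψ = cos θ • ψ + sin θ • G ψ = φ. Since G maps ψ into ψ^⊥ and ψ^⊥
into ℂψ, it is off-diagonal with respect to P. Finally G does not change when the orthonormal pair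
(ψ, χ) is rotated to (φ, cos θ • χ - sin θ • ψ), so it is off-diagonal with respect to P₀ as well.
-/

open ContinuousLinearMap InnerProductSpace
open scoped InnerProductSpace ComplexInnerProductSpace

section
variable {𝕜 E : Type*} [RCLike 𝕜] [NormedAddCommGroup E] [InnerProductSpace 𝕜 E]

variable (𝕜) in
noncomputable def planeRotationGenerator (u w : E) : E →L[𝕜] E := rankOne 𝕜 w u - rankOne 𝕜 u w

variable {u w : E}

theorem planeRotationGenerator_apply (x : E) :
    planeRotationGenerator 𝕜 u w x = ⟪u, x⟫_𝕜 • w - ⟪w, x⟫_𝕜 • u := rfl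

theorem adjoint_planeRotationGenerator [CompleteSpace E] :
    adjoint (planeRotationGenerator 𝕜 u w) = -planeRotationGenerator 𝕜 u w := by
  simp [planeRotationGenerator]

theorem planeRotationGenerator_apply_left (hu : ‖u‖ = 1) (huw : ⟪u, w⟫_𝕜 = 0) :
    planeRotationGenerator 𝕜 u w u = w := by
  simp [planeRotationGenerator_apply, inner_self_eq_norm_sq_to_K, hu, inner_eq_zero_symm.mp huw]

theorem planeRotationGenerator_apply_right (hw : ‖w‖ = 1) (huw : ⟪u, w⟫_𝕜 = 0) :
    planeRotationGenerator 𝕜 u w w = -u := by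
  simp [planeRotationGenerator_apply, inner_self_eq_norm_sq_to_K, hw, huw]

theorem rankOne_comp_planeRotationGenerator_comp_rankOne (hu : ‖u‖ = 1) (huw : ⟪u, w⟫_𝕜 = 0) :
    rankOne 𝕜 u u ∘L planeRotationGenerator 𝕜 u w ∘L rankOne 𝕜 u u = 0 := by
  simp [comp_rankOne, planeRotationGenerator_apply_left hu huw, huw]

theorem one_sub_rankOne_comp_planeRotationGenerator_comp_one_sub_rankOne (hu : ‖u‖ = 1)
    (huw : ⟪u, w⟫_𝕜 = 0) :
    (1 - rankOne 𝕜 u u) ∘L planeRotationGenerator 𝕜 u w ∘L (1 - rankOne 𝕜 u u) = 0 := by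
  simp [comp_sub, one_def, comp_rankOne, planeRotationGenerator,
    inner_self_eq_norm_sq_to_K, hu, inner_eq_zero_symm.mp huw]

theorem planeRotationGenerator_rotate (c s : ℝ) (hcs : c ^ 2 + s ^ 2 = 1) :
    planeRotationGenerator 𝕜 ((c : 𝕜) • u + (s : 𝕜) • w) ((c : 𝕜) • w - (s : 𝕜) • u)
      = planeRotationGenerator 𝕜 u w := by
  have hcs' : (c : 𝕜) ^ 2 + (s : 𝕜) ^ 2 = 1 := by exact_mod_cast hcs
  simp only [planeRotationGenerator, map_add, map_sub, map_smul, map_smulₛₗ, RCLike.conj_ofReal,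
    add_apply, sub_apply, smul_apply]
  linear_combination (norm := module) hcs' • (rankOne 𝕜 w u - rankOne 𝕜 u w)

theorem norm_planeRotationGenerator_le (hu : ‖u‖ = 1) (hw : ‖w‖ = 1) (huw : ⟪u, w⟫_𝕜 = 0) :
    ‖planeRotationGenerator 𝕜 u w‖ ≤ 1 := by
  have hON : Orthonormal 𝕜 ![u, w] := by
    rw [orthonormal_iff_ite]
    intro i j
    fin_cases i <;> fin_cases j <;>
      simp [hu, hw, huw, inner_eq_zero_symm.mp huw, inner_self_eq_norm_sq_to_K]
  refine opNorm_le_bound _ zero_le_one fun x => ?_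
  have hbessel := hON.sum_inner_products_le (s := Finset.univ) x
  simp only [Fin.sum_univ_two, Matrix.cons_val_zero, Matrix.cons_val_one,
    Matrix.cons_val_fin_one] at hbessel
  have key : ‖planeRotationGenerator 𝕜 u w x‖ ^ 2 = ‖⟪u, x⟫_𝕜‖ ^ 2 + ‖⟪w, x⟫_𝕜‖ ^ 2 := by
    rw [planeRotationGenerator_apply, @norm_sub_sq 𝕜]
    simp [norm_smul, hu, hw, inner_smul_left, inner_smul_right, inner_eq_zero_symm.mp huw]
  rw [one_mul]
  exact le_of_sq_le_sq (key ▸ hbessel) (norm_nonneg x)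

theorem pow_apply_of_apply_apply_eq_neg {A : E →L[𝕜] E} {v : E} (hA : A (A v) = -v) (k : ℕ) :
    (A ^ (2 * k)) v = (-1 : 𝕜) ^ k • v ∧ (A ^ (2 * k + 1)) v = (-1 : 𝕜) ^ k • A v := by
  induction k with
  | zero => simp
  | succ k ih =>
    have heven : (A ^ (2 * (k + 1))) v = (-1 : 𝕜) ^ (k + 1) • v := by
      rw [show 2 * (k + 1) = 2 * k + 1 + 1 by ring, pow_succ', mul_apply_eq_comp, ih.2,
        map_smul, hA, pow_succ, mul_neg_one, neg_smul, smul_neg]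
    refine ⟨heven, ?_⟩
    rw [pow_succ', mul_apply_eq_comp, heven, map_smul]

open scoped Nat in
theorem exp_smul_apply_of_apply_apply_eq_neg [CompleteSpace E] {A : E →L[𝕜] E} {v : E}
    (hA : A (A v) = -v) (θ : ℝ) :
    NormedSpace.exp ((θ : 𝕜) • A) v = (Real.cos θ : 𝕜) • v + (Real.sin θ : 𝕜) • A v := by
  have hexp := (NormedSpace.exp_series_hasSum_exp' (𝕂 := 𝕜) ((θ : 𝕜) • A)).mapL (apply 𝕜 E v)
  have hterm : ∀ n : ℕ, apply 𝕜 E v ((n !⁻¹ : 𝕜) • ((θ : 𝕜) • A) ^ n)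
      = ((θ ^ n / n ! : ℝ) : 𝕜) • (A ^ n) v := by
    intro n
    simp only [apply_apply, smul_pow, smul_apply, smul_smul]
    push_cast
    ring_nf
  simp only [hterm] at hexp
  have hcos := ((Real.hasSum_cos θ).mapL (RCLike.ofRealCLM (K := 𝕜))).smul_const v
  have hsin := ((Real.hasSum_sin θ).mapL (RCLike.ofRealCLM (K := 𝕜))).smul_const (A v)
  simp only [RCLike.ofRealCLM_apply] at hcos hsin
  refine hexp.unique (HasSum.even_add_odd ?_ ?_)
  · convert hcos using 2 with k
    rw [(pow_apply_of_apply_apply_eq_neg hA k).1, smul_smul]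
    push_cast
    ring_nf
  · convert hsin using 2 with k
    rw [(pow_apply_of_apply_apply_eq_neg hA k).2, smul_smul]
    push_cast
    ring_nf

theorem inner_smul_add_smul_smul_sub_smul (hu : ‖u‖ = 1) (hw : ‖w‖ = 1) (huw : ⟪u, w⟫_𝕜 = 0)
    (c s : ℝ) : ⟪(c : 𝕜) • u + (s : 𝕜) • w, (c : 𝕜) • w - (s : 𝕜) • u⟫_𝕜 = 0 := by
  simp only [inner_add_left, inner_sub_right, inner_smul_left, inner_smul_right,
    RCLike.conj_ofReal, inner_self_eq_norm_sq_to_K, hu, hw, huw, inner_eq_zero_symm.mp huw]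
  ring

theorem exists_inner_eq_cos {ψ φ : E} (hψ : ‖ψ‖ = 1) (hφ : ‖φ‖ = 1)
    (hre : 0 < RCLike.re ⟪ψ, φ⟫_𝕜) (him : RCLike.im ⟪ψ, φ⟫_𝕜 = 0) :
    ∃ θ : ℝ, 0 ≤ θ ∧ θ < Real.pi / 2 ∧ ⟪ψ, φ⟫_𝕜 = Real.cos θ := by
  refine ⟨Real.arccos (RCLike.re ⟪ψ, φ⟫_𝕜), Real.arccos_nonneg _,
    Real.arccos_lt_pi_div_two.mpr hre, ?_⟩
  have hle : RCLike.re ⟪ψ, φ⟫_𝕜 ≤ 1 := by simpa [hψ, hφ] using re_inner_le_norm (𝕜 := 𝕜) ψ φ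
  rw [Real.cos_arccos (by linarith) hle]
  exact RCLike.ext (by simp) (by simpa using him)

theorem exists_eq_cos_smul_add_sin_smul {ψ φ : E} (hψ : ‖ψ‖ = 1) (hφ : ‖φ‖ = 1) {θ : ℝ}
    (hθ : ⟪ψ, φ⟫_𝕜 = Real.cos θ) (hsin : 0 < Real.sin θ) :
    ∃ χ : E, ‖χ‖ = 1 ∧ ⟪ψ, χ⟫_𝕜 = 0 ∧
      φ = (Real.cos θ : 𝕜) • ψ + (Real.sin θ : 𝕜) • χ := by
  set v := φ - (Real.cos θ : 𝕜) • ψ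
  have hψv : ⟪ψ, v⟫_𝕜 = 0 := by
    simp [v, inner_sub_right, inner_smul_right, hθ, inner_self_eq_norm_sq_to_K, hψ]
  have hv : ‖v‖ = Real.sin θ := by
    have hpyth := norm_add_sq_eq_norm_sq_add_norm_sq_of_inner_eq_zero _ _
      (by rw [inner_smul_left, hψv, mul_zero] : ⟪(Real.cos θ : 𝕜) • ψ, v⟫_𝕜 = 0)
    rw [add_sub_cancel, hφ, norm_smul, hψ, RCLike.norm_ofReal] at hpyth
    have : ‖v‖ ^ 2 = Real.sin θ ^ 2 := by nlinarith [Real.sin_sq_add_cos_sq θ, sq_abs (Real.cos θ)]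
    exact (pow_left_inj₀ (norm_nonneg v) hsin.le two_ne_zero).mp this
  refine ⟨(Real.sin θ : 𝕜)⁻¹ • v, ?_, ?_, ?_⟩
  · rw [norm_smul, norm_inv, RCLike.norm_ofReal, abs_of_pos hsin, hv, inv_mul_cancel₀ hsin.ne']
  · rw [inner_smul_right, hψv, mul_zero]
  · rw [smul_smul, mul_inv_cancel₀ (by exact_mod_cast hsin.ne'), one_smul, add_sub_cancel]

end

theorem stmt5 {H : Type*} [NormedAddCommGroup H] [InnerProductSpace ℂ H]
    [FiniteDimensional ℂ H]
    (ψ φ : H) (hψ : ‖ψ‖ = 1) (hφ : ‖φ‖ = 1)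
    (hre : 0 < (⟪ψ, φ⟫ : ℂ).re) (him : (⟪ψ, φ⟫ : ℂ).im = 0)
    (P P₀ : H →L[ℂ] H)
    (hP : ∀ x, P x = (⟪ψ, x⟫ : ℂ) • ψ)
    (hP₀ : ∀ x, P₀ x = (⟪φ, x⟫ : ℂ) • φ) :
    ∃ S : H →L[ℂ] H,
      ContinuousLinearMap.adjoint S = -S ∧
      ‖S‖ < Real.pi / 2 ∧
      (NormedSpace.exp S) ψ = φ ∧
      P ∘L S ∘L P = 0 ∧
      P₀ ∘L S ∘L P₀ = 0 ∧
      (1 - P) ∘L S ∘L (1 - P) = 0 ∧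
      (1 - P₀) ∘L S ∘L (1 - P₀) = 0 := by
  obtain rfl : P = rankOne ℂ ψ ψ := ext hP
  obtain rfl : P₀ = rankOne ℂ φ φ := ext hP₀
  obtain ⟨θ, hθ0, hθ, hcos⟩ := exists_inner_eq_cos (𝕜 := ℂ) hψ hφ hre him
  obtain rfl | hθpos := hθ0.eq_or_lt
  · have hψφ : (⟪ψ, φ⟫ : ℂ) = ‖ψ‖ * ‖φ‖ := by simp [hcos, hψ, hφ]
    obtain rfl : ψ = φ := by simpa [hψ, hφ] using inner_eq_norm_mul_iff.mp hψφ
    exact ⟨0, by simp [Real.pi_pos]⟩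
  obtain ⟨χ, hχ, hψχ, rfl⟩ := exists_eq_cos_smul_add_sin_smul hψ hφ hcos
    (Real.sin_pos_of_pos_of_lt_pi hθpos (by linarith [Real.pi_pos]))
  set G := planeRotationGenerator ℂ ψ χ
  have hGψ : G ψ = χ := planeRotationGenerator_apply_left hψ hψχ
  have hGχ : G χ = -ψ := planeRotationGenerator_apply_right hχ hψχ
  have hGφ : G = planeRotationGenerator ℂ _ _ :=
    (planeRotationGenerator_rotate (Real.cos θ) (Real.sin θ) (Real.cos_sq_add_sin_sq θ)).symm
  have hφφ' := inner_smul_add_smul_smul_sub_smul hψ hχ hψχ (Real.cos θ) (Real.sin θ)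
  have hcompress (Q : H →L[ℂ] H) (hQ : Q ∘L G ∘L Q = 0) : Q ∘L ((θ : ℂ) • G) ∘L Q = 0 := by
    rw [smul_comp, comp_smul, hQ, smul_zero]
  refine ⟨(θ : ℂ) • G, ?_, ?_, ?_,
    hcompress _ (rankOne_comp_planeRotationGenerator_comp_rankOne hψ hψχ),
    hcompress _ (hGφ ▸ rankOne_comp_planeRotationGenerator_comp_rankOne hφ hφφ'),
    hcompress _ (one_sub_rankOne_comp_planeRotationGenerator_comp_one_sub_rankOne hψ hψχ),
    hcompress _ (hGφ ▸ one_sub_rankOne_comp_planeRotationGenerator_comp_one_sub_rankOne hφ hφφ')⟩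
  · rw [map_smulₛₗ, adjoint_planeRotationGenerator, Complex.conj_ofReal, smul_neg]
  · calc ‖(θ : ℂ) • G‖ = θ * ‖G‖ := by rw [norm_smul, Complex.norm_real, Real.norm_of_nonneg hθ0]
      _ ≤ θ := mul_le_of_le_one_right hθ0 (norm_planeRotationGenerator_le hψ hχ hψχ)
      _ < Real.pi / 2 := hθ
  · -- the generic cast `ℝ → 𝕜` is only definitionally `Complex.ofReal`, so `rw` would not fire
    exact (exp_smul_apply_of_apply_apply_eq_neg (by rw [hGψ, hGχ]) θ).trans (by rw [hGψ])
end

section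
/- Let Pᴬ, P₀ᴬ be orthogonal projectors on a finite-dimensional Hilbert space H_A with ‖Pᴬ - P₀ᴬ‖ < 1, and Pᴮ, P₀ᴮ orthogonal projectors on H_B with ‖Pᴮ - P₀ᴮ‖ < 1. Then ‖Pᴬ ⊗ Pᴮ - P₀ᴬ ⊗ P₀ᴮ‖ < 1. -/
/-!
For orthogonal projections `p, q`, the distance `‖p - q‖` is governed by lower bounds
`c • p ≤ p * q * p` and `c • q ≤ q * p * q`. Since `p - p * q * p = p * (p - q)² * p`, one may take
`c = 1 - ‖p - q‖²`. Conversely `(p - q)² = (p - p * q * p) + (1 - p) * q * (1 - p)`, and both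
summands are at most `1 - c` times the complementary projections `p` and `1 - p`, so
`‖p - q‖² ≤ 1 - c`. The Kronecker product is monotone on positive semidefinite matrices, so the
lower bounds of the factors multiply: the product projections satisfy them with
`c = (1 - ‖PA - P₀A‖²) * (1 - ‖PB - P₀B‖²) > 0`.
-/

open scoped Matrix.Norms.L2Operator Kronecker MatrixOrder ComplexOrder

namespace IsStarProjection

section Ring

variable {R : Type*} [Ring R] [StarRing R] {p q : R}

lemma sub_mul_mul_eq (hp : IsStarProjection p) (hq : IsStarProjection q) :
    p - p * q * p = p * (star (p - q) * (p - q)) * p := by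
  rw [(hp.isSelfAdjoint.sub hq.isSelfAdjoint).star_eq]
  simp only [mul_sub, sub_mul, ← mul_assoc, hp.isIdempotentElem.eq,
    hp.isIdempotentElem.mul_mul_self, hq.isIdempotentElem.mul_mul_self]
  abel

lemma star_sub_mul_sub_eq (hp : IsStarProjection p) (hq : IsStarProjection q) :
    star (p - q) * (p - q) = (p - p * q * p) + (1 - p) * q * (1 - p) := by
  rw [(hp.isSelfAdjoint.sub hq.isSelfAdjoint).star_eq]
  simp only [mul_sub, sub_mul, one_mul, mul_one, hp.isIdempotentElem.eq, hq.isIdempotentElem.eq]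
  abel

end Ring

variable {A : Type*} [CStarAlgebra A] [PartialOrder A] [StarOrderedRing A] {p q : A}

lemma conjugate_star_mul_self_le (hp : IsStarProjection p) (a : A) :
    p * (star a * a) * p ≤ (‖a‖ ^ 2) • p := by
  calc p * (star a * a) * p ≤ p * algebraMap ℝ A (‖a‖ ^ 2) * p :=
        hp.isSelfAdjoint.conjugate_le_conjugate CStarAlgebra.star_mul_le_algebraMap_norm_sq
    _ = (‖a‖ ^ 2) • p := by
        rw [Algebra.algebraMap_eq_smul_one, mul_smul_one, smul_mul_assoc, hp.isIdempotentElem.eq]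

lemma one_sub_norm_sub_sq_smul_le (hp : IsStarProjection p) (hq : IsStarProjection q) :
    (1 - ‖p - q‖ ^ 2) • p ≤ p * q * p := by
  have h := hp.conjugate_star_mul_self_le (p - q)
  rw [← hp.sub_mul_mul_eq hq] at h
  rw [sub_smul, one_smul]
  exact sub_le_comm.mp h

lemma norm_mul_one_sub_sq_le {c : ℝ} (hp : IsStarProjection p) (hq : IsStarProjection q)
    (hc : c ≤ 1) (hqp : c • q ≤ q * p * q) : ‖q * (1 - p)‖ ^ 2 ≤ 1 - c := by
  have hr := hp.one_sub
  have hx : q * (1 - p) * star (q * (1 - p)) = q - q * p * q := by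
    simp only [star_mul, hr.isSelfAdjoint.star_eq, hq.isSelfAdjoint.star_eq, ← mul_assoc,
      hr.isIdempotentElem.mul_mul_self]
    simp only [mul_sub, sub_mul, mul_one, hq.isIdempotentElem.eq]
  have hle : q - q * p * q ≤ (1 - c) • q := by
    rw [sub_smul, one_smul]
    exact sub_le_sub_left hqp q
  calc ‖q * (1 - p)‖ ^ 2 = ‖q - q * p * q‖ := by rw [← hx, CStarRing.norm_self_mul_star, sq]
    _ ≤ ‖(1 - c) • q‖ :=
      CStarAlgebra.norm_le_norm_of_nonneg_of_le (hx ▸ mul_star_self_nonneg _) hle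
    _ ≤ 1 - c := by
      rw [norm_smul, Real.norm_of_nonneg (sub_nonneg.2 hc)]
      exact mul_le_of_le_one_right (sub_nonneg.2 hc) hq.norm_le

lemma norm_sub_sq_le {c : ℝ} (hp : IsStarProjection p) (hq : IsStarProjection q) (hc : c ≤ 1)
    (hpq : c • p ≤ p * q * p) (hqp : c • q ≤ q * p * q) : ‖p - q‖ ^ 2 ≤ 1 - c := by
  have hr := hp.one_sub
  have hp_part : p - p * q * p ≤ (1 - c) • p := by
    rw [sub_smul, one_smul]
    exact sub_le_sub_left hpq p
  have hr_part : (1 - p) * q * (1 - p) ≤ (1 - c) • (1 - p) := by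
    have h := hr.conjugate_star_mul_self_le (q * (1 - p))
    simp only [star_mul, hr.isSelfAdjoint.star_eq, hq.isSelfAdjoint.star_eq, ← mul_assoc,
      hq.isIdempotentElem.mul_mul_self, hr.isIdempotentElem.eq,
      hr.isIdempotentElem.mul_mul_self] at h
    exact h.trans (smul_le_smul_of_nonneg_right (hp.norm_mul_one_sub_sq_le hq hc hqp) hr.nonneg)
  have hsq : star (p - q) * (p - q) ≤ algebraMap ℝ A (1 - c) := by
    calc star (p - q) * (p - q) ≤ (1 - c) • p + (1 - c) • (1 - p) := by
          rw [hp.star_sub_mul_sub_eq hq]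
          exact add_le_add hp_part hr_part
      _ = algebraMap ℝ A (1 - c) := by
          rw [← smul_add, add_sub_cancel, Algebra.algebraMap_eq_smul_one]
  rw [sq, ← CStarRing.norm_star_mul_self]
  exact (CStarAlgebra.norm_le_iff_le_algebraMap _ (sub_nonneg.2 hc)
    (star_mul_self_nonneg _)).mpr hsq

end IsStarProjection

lemma IsStarProjection.kronecker {m n R : Type*} [CommSemiring R] [StarRing R]
    [Fintype m] [Fintype n] {p : Matrix m m R} {q : Matrix n n R}
    (hp : IsStarProjection p) (hq : IsStarProjection q) : IsStarProjection (p ⊗ₖ q) where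
  isIdempotentElem := by
    rw [IsIdempotentElem, ← Matrix.mul_kronecker_mul, hp.isIdempotentElem.eq,
      hq.isIdempotentElem.eq]
  isSelfAdjoint := by
    rw [IsSelfAdjoint, Matrix.star_eq_conjTranspose, Matrix.conjTranspose_kronecker]
    exact congr_arg₂ _ hp.isSelfAdjoint.star_eq hq.isSelfAdjoint.star_eq

namespace Matrix

variable {m n 𝕜 : Type*} [RCLike 𝕜] [Fintype m] [Fintype n]

lemma kronecker_le_kronecker {A B : Matrix m m 𝕜} {C D : Matrix n n 𝕜}
    (hB : 0 ≤ B) (hBA : B ≤ A) (hD : 0 ≤ D) (hDC : D ≤ C) : B ⊗ₖ D ≤ A ⊗ₖ C := by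
  have h : A ⊗ₖ C - B ⊗ₖ D = (A - B) ⊗ₖ C + B ⊗ₖ (C - D) := by
    ext ⟨i, j⟩ ⟨k, l⟩
    simp only [sub_apply, add_apply, kroneckerMap_apply]
    ring
  rw [le_iff, h]
  exact (PosSemidef.kronecker hBA (nonneg_iff_posSemidef.mp (hD.trans hDC))).add
    ((nonneg_iff_posSemidef.mp hB).kronecker hDC)

lemma smul_kronecker_le_kronecker_mul_mul {p q : Matrix m m 𝕜} {p' q' : Matrix n n 𝕜}
    {c c' : ℝ} (hp : 0 ≤ p) (hp' : 0 ≤ p') (hc : 0 ≤ c) (hc' : 0 ≤ c')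
    (h : c • p ≤ p * q * p) (h' : c' • p' ≤ p' * q' * p') :
    (c * c') • (p ⊗ₖ p') ≤ (p ⊗ₖ p') * (q ⊗ₖ q') * (p ⊗ₖ p') := by
  rw [← mul_kronecker_mul, ← mul_kronecker_mul, mul_smul, ← kronecker_smul, ← smul_kronecker]
  exact kronecker_le_kronecker (smul_nonneg hc hp) h (smul_nonneg hc' hp') h'

end Matrix

theorem stmt8 {m n : Type*} [Fintype m] [DecidableEq m] [Fintype n] [DecidableEq n]
    (PA P₀A : Matrix m m ℂ) (PB P₀B : Matrix n n ℂ)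
    (hPA : PA.conjTranspose = PA) (hPAidem : PA * PA = PA)
    (hP₀A : P₀A.conjTranspose = P₀A) (hP₀Aidem : P₀A * P₀A = P₀A)
    (hPB : PB.conjTranspose = PB) (hPBidem : PB * PB = PB)
    (hP₀B : P₀B.conjTranspose = P₀B) (hP₀Bidem : P₀B * P₀B = P₀B)
    (hA : ‖PA - P₀A‖ < 1) (hB : ‖PB - P₀B‖ < 1) :
    ‖PA ⊗ₖ PB - P₀A ⊗ₖ P₀B‖ < 1 := by
  have pA : IsStarProjection PA := ⟨hPAidem, hPA⟩
  have p₀A : IsStarProjection P₀A := ⟨hP₀Aidem, hP₀A⟩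
  have pB : IsStarProjection PB := ⟨hPBidem, hPB⟩
  have p₀B : IsStarProjection P₀B := ⟨hP₀Bidem, hP₀B⟩
  have hcA : 0 < 1 - ‖PA - P₀A‖ ^ 2 := sub_pos.2 (pow_lt_one₀ (norm_nonneg _) hA two_ne_zero)
  have hcB : 0 < 1 - ‖PB - P₀B‖ ^ 2 := sub_pos.2 (pow_lt_one₀ (norm_nonneg _) hB two_ne_zero)
  have hPQ := Matrix.smul_kronecker_le_kronecker_mul_mul pA.nonneg pB.nonneg hcA.le hcB.le
    (pA.one_sub_norm_sub_sq_smul_le p₀A) (pB.one_sub_norm_sub_sq_smul_le p₀B)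
  have hQP := Matrix.smul_kronecker_le_kronecker_mul_mul p₀A.nonneg p₀B.nonneg hcA.le hcB.le
    (norm_sub_rev PA P₀A ▸ p₀A.one_sub_norm_sub_sq_smul_le pA)
    (norm_sub_rev PB P₀B ▸ p₀B.one_sub_norm_sub_sq_smul_le pB)
  have hsq := (pA.kronecker pB).norm_sub_sq_le (p₀A.kronecker p₀B)
    (mul_le_one₀ (sub_le_self _ (sq_nonneg _)) hcB.le (sub_le_self _ (sq_nonneg _))) hPQ hQP
  exact (pow_lt_one_iff_of_nonneg (norm_nonneg _) two_ne_zero).mp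
    (hsq.trans_lt (sub_lt_self 1 (mul_pos hcA hcB)))
end

section
/- Let P₀ be an orthogonal projector and S an anti-Hermitian block-off-diagonal operator (P₀SP₀ = 0 = (I-P₀)S(I-P₀)) with ‖S‖ < π/2. Then the compressions P₀ exp(S) P₀ and (I-P₀) exp(S) (I-P₀), viewed as operators on range(P₀) and range(I-P₀) respectively, are positive-definite. -/
open ContinuousLinearMap NormedSpace Complex
open scoped ComplexInnerProductSpace

/-!
Writing `S = i A` with `A` self-adjoint, in an orthonormal eigenbasis `bᵢ` of `A` one gets
`Re ⟪x, exp S x⟫ = ∑ cos μᵢ ‖⟪bᵢ, x⟫‖² ≥ cos ‖S‖ ‖x‖²`, which is positive for `x ≠ 0` since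
`|μᵢ| ≤ ‖S‖ < π/2`.

For self-adjointness of the compressions, the reflection `U = 2P - 1` is an involution with
`U S U = -S` when `S` is block-off-diagonal, so `exp (-S) = U exp S U`; as `P U = P = U P`, this
gives `P (exp S)⋆ P = P exp (-S) P = P exp S P`. The same argument applies to `1 - P`.
-/

section Reflection

variable {R : Type*} [Ring R] {P S : R}

theorem IsIdempotentElem.two_mul_sub_one_mul_self (hP : IsIdempotentElem P) :
    (2 * P - 1) * (2 * P - 1) = 1 := by
  have : (2 * P - 1) * (2 * P - 1) = 4 * (P * P) - 4 * P + 1 := by noncomm_ring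
  rw [this, hP.eq, sub_self, zero_add]

theorem two_mul_sub_one_conj_eq_neg (h₁ : P * S * P = 0) (h₂ : (1 - P) * S * (1 - P) = 0) :
    (2 * P - 1) * S * (2 * P - 1) = -S := by
  have : (2 * P - 1) * S * (2 * P - 1) = 2 * ((1 - P) * S * (1 - P)) + 2 * (P * S * P) - S := by
    noncomm_ring
  rw [this, h₁, h₂]
  simp

end Reflection

section ExpReflection

variable {A : Type*} [NormedRing A] [NormedAlgebra ℚ A] [CompleteSpace A] {P S : A}

theorem exp_conj_of_mul_self_eq_one {U : A} (hU : U * U = 1) (x : A) :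
    exp (U * x * U) = U * exp x * U :=
  exp_units_conj ⟨U, U, hU, hU⟩ x

theorem mul_exp_neg_mul_of_offDiag (hP : IsIdempotentElem P) (h₁ : P * S * P = 0)
    (h₂ : (1 - P) * S * (1 - P) = 0) : P * exp (-S) * P = P * exp S * P := by
  have hPU : P * (2 * P - 1) = P := by
    rw [mul_sub, ← mul_assoc, (Commute.ofNat_right P 2).eq, mul_assoc, hP.eq, two_mul]; simp
  have hUP : (2 * P - 1) * P = P := by
    rw [sub_mul, mul_assoc, hP.eq, two_mul]; simp
  rw [← two_mul_sub_one_conj_eq_neg h₁ h₂,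
    exp_conj_of_mul_self_eq_one hP.two_mul_sub_one_mul_self]
  calc P * ((2 * P - 1) * exp S * (2 * P - 1)) * P
      = P * (2 * P - 1) * exp S * ((2 * P - 1) * P) := by simp only [mul_assoc]
    _ = P * exp S * P := by rw [hPU, hUP]

theorem IsStarProjection.isSelfAdjoint_mul_exp_mul [StarRing A] [ContinuousStar A]
    (hP : IsStarProjection P) (hS : star S = -S) (h₁ : P * S * P = 0)
    (h₂ : (1 - P) * S * (1 - P) = 0) : IsSelfAdjoint (P * exp S * P) := by
  rw [IsSelfAdjoint, star_mul, star_mul, hP.isSelfAdjoint.star_eq, star_exp, hS, ← mul_assoc,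
    mul_exp_neg_mul_of_offDiag hP.isIdempotentElem h₁ h₂]

end ExpReflection

section Positivity

variable {E : Type*} [NormedAddCommGroup E]

theorem exp_apply_of_apply_eq_smul [NormedSpace ℂ E] [CompleteSpace E] {T : E →L[ℂ] E} {c : ℂ}
    {v : E} (h : T v = c • v) : exp T v = Complex.exp c • v := by
  have hpow : ∀ n : ℕ, (T ^ n) v = c ^ n • v := by
    intro n
    induction n with
    | zero => simp
    | succ n ih => rw [pow_succ, mul_apply_eq_comp, h, map_smul, ih, smul_smul, ← pow_succ']
  have hT := (exp_series_hasSum_exp' (𝕂 := ℂ) T).mapL (ContinuousLinearMap.apply ℂ E v)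
  have hc := (exp_series_hasSum_exp' (𝕂 := ℂ) c).smul_const v
  rw [Complex.exp_eq_exp_ℂ]
  refine hT.unique ?_
  simpa [hpow, smul_smul] using hc

variable [InnerProductSpace ℂ E] [FiniteDimensional ℂ E]

theorem cos_norm_mul_sq_le_re_inner_exp {A : E →L[ℂ] E} (hA : IsSelfAdjoint A)
    (hπ : ‖A‖ ≤ Real.pi) (x : E) :
    Real.cos ‖A‖ * ‖x‖ ^ 2 ≤ re ⟪x, exp (I • A) x⟫ := by
  have hsymm := isSelfAdjoint_iff_isSymmetric.mp hA
  set b := hsymm.eigenvectorBasis rfl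
  set μ := hsymm.eigenvalues rfl
  have hAb : ∀ i, A (b i) = (μ i : ℂ) • b i := hsymm.apply_eigenvectorBasis rfl
  have hexp : ∀ i, exp (I • A) (b i) = Complex.exp (μ i * I) • b i := fun i =>
    exp_apply_of_apply_eq_smul (by rw [smul_apply, hAb, smul_smul, mul_comm])
  have hμ : ∀ i, |μ i| ≤ ‖A‖ := fun i => by
    simpa [hAb, norm_smul, b.orthonormal.1 i] using A.le_opNorm (b i)
  have hre : re ⟪x, exp (I • A) x⟫ = ∑ i, Real.cos (μ i) * ‖⟪b i, x⟫‖ ^ 2 := by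
    have hx : exp (I • A) x = ∑ i, (⟪b i, x⟫ * Complex.exp (μ i * I)) • b i := by
      conv_lhs => rw [← b.sum_repr' x]
      simp only [map_sum, map_smul, hexp, smul_smul]
    rw [hx, inner_sum, re_sum]
    refine Finset.sum_congr rfl fun i _ => ?_
    rw [inner_smul_right, ← inner_conj_symm x (b i), mul_comm _ (Complex.exp _), mul_assoc,
      Complex.mul_conj', ← ofReal_pow, re_mul_ofReal, exp_ofReal_mul_I_re]
  calc Real.cos ‖A‖ * ‖x‖ ^ 2 = ∑ i, Real.cos ‖A‖ * ‖⟪b i, x⟫‖ ^ 2 := by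
        rw [← b.sum_sq_norm_inner_right, Finset.mul_sum]
    _ ≤ ∑ i, Real.cos (μ i) * ‖⟪b i, x⟫‖ ^ 2 := by
        gcongr with i
        rw [← Real.cos_abs (μ i)]
        exact Real.cos_le_cos_of_nonneg_of_le_pi (abs_nonneg _) hπ (hμ i)
    _ = _ := hre.symm

theorem re_inner_exp_pos_of_star_eq_neg {S : E →L[ℂ] E} (hS : star S = -S)
    (hnorm : ‖S‖ < Real.pi / 2) {x : E} (hx : x ≠ 0) : 0 < re ⟪x, exp S x⟫ := by
  have hA : IsSelfAdjoint (-I • S) := by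
    rw [IsSelfAdjoint, star_smul, hS]
    simp
  have hIA : I • (-I • S) = S := by
    rw [smul_smul]
    simp
  have hnA : ‖-I • S‖ = ‖S‖ := by simp [norm_smul]
  have hcos : 0 < Real.cos ‖S‖ :=
    Real.cos_pos_of_mem_Ioo ⟨by linarith [norm_nonneg S], hnorm⟩
  calc 0 < Real.cos ‖-I • S‖ * ‖x‖ ^ 2 := by rw [hnA]; positivity
    _ ≤ re ⟪x, exp S x⟫ := by
      simpa only [hIA] using cos_norm_mul_sq_le_re_inner_exp hA (by linarith [Real.pi_pos]) x

end Positivity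

theorem stmt12 {H : Type*} [NormedAddCommGroup H] [InnerProductSpace ℂ H]
    [FiniteDimensional ℂ H]
    (P₀ S : H →L[ℂ] H)
    (hP₀ : ContinuousLinearMap.adjoint P₀ = P₀) (hP₀idem : P₀ ∘L P₀ = P₀)
    (hS : ContinuousLinearMap.adjoint S = -S)
    (hod : P₀ ∘L S ∘L P₀ = 0 ∧ (1 - P₀) ∘L S ∘L (1 - P₀) = 0)
    (hnorm : ‖S‖ < Real.pi / 2) :
    (ContinuousLinearMap.adjoint (P₀ ∘L NormedSpace.exp S ∘L P₀) =
        P₀ ∘L NormedSpace.exp S ∘L P₀ ∧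
      ∀ x : H, P₀ x = x → x ≠ 0 → 0 < ((⟪x, (NormedSpace.exp S) x⟫ : ℂ)).re) ∧
    (ContinuousLinearMap.adjoint ((1 - P₀) ∘L NormedSpace.exp S ∘L (1 - P₀)) =
        (1 - P₀) ∘L NormedSpace.exp S ∘L (1 - P₀) ∧
      ∀ x : H, (1 - P₀) x = x → x ≠ 0 →
        0 < ((⟪x, (NormedSpace.exp S) x⟫ : ℂ)).re) := by
  let +nondep : NormedAlgebra ℚ (H →L[ℂ] H) := .restrictScalars ℚ ℂ _
  have hP : IsStarProjection P₀ := ⟨hP₀idem, hP₀⟩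
  have hS' : star S = -S := hS
  have hpos (x : H) (hx : x ≠ 0) : 0 < re ⟪x, exp S x⟫ :=
    re_inner_exp_pos_of_star_eq_neg hS' hnorm hx
  have hP₁ : P₀ * S * P₀ = 0 := hod.1
  have hQ₁ : (1 - P₀) * S * (1 - P₀) = 0 := hod.2
  refine ⟨⟨?_, fun x _ => hpos x⟩, ⟨?_, fun x _ => hpos x⟩⟩
  · exact (hP.isSelfAdjoint_mul_exp_mul hS' hP₁ hQ₁).star_eq
  · exact (hP.one_sub.isSelfAdjoint_mul_exp_mul hS' hQ₁ (by rwa [sub_sub_cancel])).star_eq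
end

section
/- With H₀ having a single eigenvalue on the low-energy subspace (H₀P₀ = E P₀ for some scalar E), for any operators X, Y one has P₀ [L(X), O(Y)] P₀ = - P₀ [O(X), L(Y)] P₀, where O(Z) = P₀ Z Q₀ + Q₀ Z P₀ and L is the gap-weighted superoperator L(Z) = Σ ⟨i|O(Z)|j⟩/(E_i - E_j) |i⟩⟨j| summed over pairs with exactly one index in I₀. -/
open ContinuousLinearMap
open scoped ComplexInnerProductSpace

/-!
Because `E` is constant (`= Esc`) on `I₀`, the gap-weighted superoperator factors through the
reduced resolvent `R = ∑_{k ∉ I₀} (Esc - E k)⁻¹ |k⟩⟨k|`: `L Z = P₀ Z R - R Z P₀`. Since `P₀² = P₀` and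
`P₀ R = R P₀ = 0`, a short computation in the operator ring gives
`P₀ [L X, O Y] P₀ = P₀ X R Y P₀ + P₀ Y R X P₀`, which is symmetric in `X` and `Y`; the claimed
identity is exactly this symmetry.
-/

section Ring

variable {A : Type*} [Ring A]

theorem projection_sandwich_commutator_eq {P R : A} (hPP : P * P = P) (hPR : P * R = 0)
    (hRP : R * P = 0) {O L : A → A} (hO : ∀ Z, O Z = P * Z * (1 - P) + (1 - P) * Z * P)
    (hL : ∀ Z, L Z = P * Z * R - R * Z * P) (X Y : A) :
    P * (L X * O Y - O Y * L X) * P = P * X * R * Y * P + P * Y * R * X * P := by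
  have hPP' : ∀ x, P * (P * x) = P * x := fun x => by rw [← mul_assoc, hPP]
  have hPR' : ∀ x, P * (R * x) = 0 := fun x => by rw [← mul_assoc, hPR, zero_mul]
  have hRP' : ∀ x, R * (P * x) = 0 := fun x => by rw [← mul_assoc, hRP, zero_mul]
  simp only [hO, hL, mul_sub, sub_mul, mul_add, add_mul, mul_one, one_mul, mul_assoc, hPP, hPP',
    hPR', hRP', mul_neg, neg_mul, neg_zero, mul_zero, sub_zero, zero_sub, sub_self, add_zero,
    zero_add]
  abel

end Ring

namespace OrthonormalBasis

variable {𝕜 E ι : Type*} [RCLike 𝕜] [NormedAddCommGroup E] [InnerProductSpace 𝕜 E] [Fintype ι]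
  (e : OrthonormalBasis ι 𝕜 E)

theorem ext_continuousLinearMap {A B : E →L[𝕜] E}
    (h : ∀ a b, inner 𝕜 (e a) (A (e b)) = inner 𝕜 (e a) (B (e b))) : A = B :=
  ContinuousLinearMap.coe_injective <| e.toBasis.ext fun b =>
    InnerProductSpace.ext_inner_left_basis e.toBasis fun a => by simpa using h a b

theorem inner_sum_sum_mul_inner_smul (M : ι → ι → 𝕜) (a b : ι) :
    inner 𝕜 (e a) (∑ i, ∑ j, (M i j * inner 𝕜 (e j) (e b)) • e i) = M a b := by
  classical
  simp [inner_sum, inner_smul_right, orthonormal_iff_ite.mp e.orthonormal]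

noncomputable def diagonal (w : ι → 𝕜) : E →L[𝕜] E :=
  ∑ i, w i • (innerSL 𝕜 (e i)).smulRight (e i)

theorem diagonal_apply (w : ι → 𝕜) (x : E) :
    e.diagonal w x = ∑ i, (w i * inner 𝕜 (e i) x) • e i := by
  simp [diagonal, mul_smul]

@[simp]
theorem diagonal_apply_self (w : ι → 𝕜) (b : ι) : e.diagonal w (e b) = w b • e b := by
  classical
  simp [diagonal_apply, orthonormal_iff_ite.mp e.orthonormal]

@[simp]
theorem inner_diagonal (w : ι → 𝕜) (a : ι) (x : E) :
    inner 𝕜 (e a) (e.diagonal w x) = w a * inner 𝕜 (e a) x := by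
  classical
  simp [diagonal_apply, inner_sum, inner_smul_right, orthonormal_iff_ite.mp e.orthonormal]

theorem diagonal_mul_diagonal (w v : ι → 𝕜) : e.diagonal w * e.diagonal v = e.diagonal (w * v) :=
  e.ext_continuousLinearMap fun a b => by simp [inner_smul_right, mul_assoc, mul_left_comm]

@[simp]
theorem diagonal_zero : e.diagonal 0 = 0 := by
  simp [diagonal]

theorem one_sub_diagonal (w : ι → 𝕜) : 1 - e.diagonal w = e.diagonal (1 - w) :=
  e.ext_continuousLinearMap fun a b => by simp [sub_smul]

theorem inner_diagonal_mul_mul_diagonal_apply (w v : ι → 𝕜) (Z : E →L[𝕜] E) (a b : ι) :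
    inner 𝕜 (e a) ((e.diagonal w * Z * e.diagonal v) (e b)) =
      w a * inner 𝕜 (e a) (Z (e b)) * v b := by
  simp [inner_smul_right, mul_comm]

end OrthonormalBasis

theorem stmt15_general {H : Type*} [NormedAddCommGroup H] [InnerProductSpace ℂ H]
    {ι : Type*} [Fintype ι] [DecidableEq ι]
    (e : OrthonormalBasis ι ℂ H) (E : ι → ℝ)
    (I₀ : Finset ι) (Esc : ℝ)
    (hflat : ∀ i ∈ I₀, E i = Esc)
    (P₀ : H →L[ℂ] H)
    (hP₀ : ∀ x, P₀ x = ∑ i ∈ I₀, (⟪e i, x⟫ : ℂ) • e i)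
    (O : (H →L[ℂ] H) → (H →L[ℂ] H))
    (hO : ∀ Z, O Z = P₀ ∘L Z ∘L (1 - P₀) + (1 - P₀) ∘L Z ∘L P₀)
    (L : (H →L[ℂ] H) → (H →L[ℂ] H))
    (hL : ∀ (Z : H →L[ℂ] H) (x : H), L Z x =
      ∑ i : ι, ∑ j : ι,
        (if (i ∈ I₀ ∧ j ∉ I₀) ∨ (i ∉ I₀ ∧ j ∈ I₀) then
          (⟪e i, (O Z) (e j)⟫ : ℂ) / ((E i : ℂ) - (E j : ℂ)) * (⟪e j, x⟫ : ℂ)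
        else 0) • e i) :
    ∀ X Y : H →L[ℂ] H,
      P₀ ∘L (L X ∘L O Y - O Y ∘L L X) ∘L P₀ =
        -(P₀ ∘L (O X ∘L L Y - L Y ∘L O X) ∘L P₀) := by
  intro X Y
  set p : ι → ℂ := fun i => if i ∈ I₀ then 1 else 0
  set r : ι → ℂ := fun i => if i ∈ I₀ then 0 else ((Esc : ℂ) - E i)⁻¹
  have hP : P₀ = e.diagonal p := by
    ext x
    simp [hP₀, e.diagonal_apply, p, ite_mul, ite_smul, Finset.sum_ite_mem]
  have hpp : p * p = p := funext fun i => by by_cases hi : i ∈ I₀ <;> simp [p, hi]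
  have hpr : p * r = 0 := funext fun i => by by_cases hi : i ∈ I₀ <;> simp [p, r, hi]
  have hPP : P₀ * P₀ = P₀ := by rw [hP, e.diagonal_mul_diagonal, hpp]
  have hPR : P₀ * e.diagonal r = 0 := by rw [hP, e.diagonal_mul_diagonal, hpr, e.diagonal_zero]
  have hRP : e.diagonal r * P₀ = 0 := by
    rw [hP, e.diagonal_mul_diagonal, mul_comm, hpr, e.diagonal_zero]
  have hO' : ∀ Z, O Z = P₀ * Z * (1 - P₀) + (1 - P₀) * Z * P₀ := fun Z => hO Z
  have hL' : ∀ Z, L Z = P₀ * Z * e.diagonal r - e.diagonal r * Z * P₀ := by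
    intro Z
    refine e.ext_continuousLinearMap fun a b => ?_
    simp only [hL, ← ite_zero_mul, e.inner_sum_sum_mul_inner_smul, hO', hP, e.one_sub_diagonal,
      add_apply, sub_apply, inner_add_right, inner_sub_right,
      e.inner_diagonal_mul_mul_diagonal_apply]
    by_cases ha : a ∈ I₀ <;> by_cases hb : b ∈ I₀
    · simp [ha, hb, p, r]
    · simp [ha, hb, p, r, hflat a ha, div_eq_mul_inv, mul_comm]
    · simp [ha, hb, p, r, hflat b hb, div_eq_inv_mul, ← neg_mul, ← inv_neg]
    · simp [ha, hb, p, r]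
  show P₀ * (L X * O Y - O Y * L X) * P₀ = -(P₀ * (O X * L Y - L Y * O X) * P₀)
  rw [← neg_sub (L Y * O X), mul_neg, neg_mul, neg_neg,
    projection_sandwich_commutator_eq hPP hPR hRP hO' hL',
    projection_sandwich_commutator_eq hPP hPR hRP hO' hL', add_comm]

theorem stmt15 {H : Type*} [NormedAddCommGroup H] [InnerProductSpace ℂ H]
    [FiniteDimensional ℂ H]
    {ι : Type*} [Fintype ι] [DecidableEq ι]
    (e : OrthonormalBasis ι ℂ H) (E : ι → ℝ)
    (H₀ : H →L[ℂ] H) (hH₀ : ∀ i, H₀ (e i) = (E i : ℂ) • e i)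
    (I₀ : Finset ι) (Esc : ℝ)
    (hflat : ∀ i ∈ I₀, E i = Esc) (hsep : ∀ j ∉ I₀, E j ≠ Esc)
    (P₀ : H →L[ℂ] H)
    (hP₀ : ∀ x, P₀ x = ∑ i ∈ I₀, (⟪e i, x⟫ : ℂ) • e i)
    (O : (H →L[ℂ] H) → (H →L[ℂ] H))
    (hO : ∀ Z, O Z = P₀ ∘L Z ∘L (1 - P₀) + (1 - P₀) ∘L Z ∘L P₀)
    (L : (H →L[ℂ] H) → (H →L[ℂ] H))
    (hL : ∀ (Z : H →L[ℂ] H) (x : H), L Z x =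
      ∑ i : ι, ∑ j : ι,
        (if (i ∈ I₀ ∧ j ∉ I₀) ∨ (i ∉ I₀ ∧ j ∈ I₀) then
          (⟪e i, (O Z) (e j)⟫ : ℂ) / ((E i : ℂ) - (E j : ℂ)) * (⟪e j, x⟫ : ℂ)
        else 0) • e i) :
    ∀ X Y : H →L[ℂ] H,
      P₀ ∘L (L X ∘L O Y - O Y ∘L L X) ∘L P₀ =
        -(P₀ ∘L (O X ∘L L Y - L Y ∘L O X) ∘L P₀) :=
  stmt15_general e E I₀ Esc hflat P₀ hP₀ O hO L hL
end

section
/- Let P₀ be an orthogonal projector and S an anti-Hermitian block-off-diagonal operator with respect to P₀. For any Hermitian H, decompose exp(ad_S)(H) into its block-diagonal and block-off-diagonal parts with respect to P₀. Then the block-diagonal part equals cosh(ad_S)(H_d) + sinh(ad_S)(H_od) and the block-off-diagonal part equals sinh(ad_S)(H_d) + cosh(ad_S)(H_od), where H_d = P₀HP₀ + Q₀HQ₀ and H_od = P₀HQ₀ + Q₀HP₀ with Q₀ = I - P₀. -/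
/-! Because `S` is block-off-diagonal, `ad_S` maps block-diagonal operators to block-off-diagonal
ones and vice versa. Hence the block-diagonal part of `ad_S^n H` is `ad_S^n H_d` for even `n` and
`ad_S^n H_od` for odd `n` (and symmetrically for the off-diagonal part). Applying the continuous
block projections termwise to the exponential series and splitting it into its even and odd terms
gives the `cosh` and `sinh` series. -/

open ContinuousLinearMap

section BlockDecomposition

variable {R : Type*} [Ring R]

def blockDiag (P X : R) : R := P * X * P + (1 - P) * X * (1 - P)

def blockOffDiag (P X : R) : R := P * X * (1 - P) + (1 - P) * X * P

/- For an idempotent `P`, `Commute P Y` says that `Y` is block-diagonal and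
`P * Y + Y * P = Y` that `Y` is block-off-diagonal with respect to `P, 1 - P`. -/

variable {P S Y : R}

theorem blockDiag_add_blockOffDiag (P X : R) : blockDiag P X + blockOffDiag P X = X := by
  unfold blockDiag blockOffDiag; noncomm_ring

theorem blockDiag_add (P X Y : R) : blockDiag P (X + Y) = blockDiag P X + blockDiag P Y := by
  unfold blockDiag; noncomm_ring

theorem blockOffDiag_add (P X Y : R) :
    blockOffDiag P (X + Y) = blockOffDiag P X + blockOffDiag P Y := by
  unfold blockOffDiag; noncomm_ring

theorem mul_add_mul_eq_of_corners_eq_zero (h₁ : P * S * P = 0)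
    (h₂ : (1 - P) * S * (1 - P) = 0) : P * S + S * P = S := by
  have h : P * S + S * P = S + P * S * P - (1 - P) * S * (1 - P) := by noncomm_ring
  rw [h, h₁, h₂, add_zero, sub_zero]

theorem mul_commutator_add_commutator_mul_of_commute (hS : P * S + S * P = S)
    (hY : Commute P Y) : P * (S * Y - Y * S) + (S * Y - Y * S) * P = S * Y - Y * S := by
  have h : P * (S * Y - Y * S) + (S * Y - Y * S) * P = S * Y - Y * S
      + (P * S + S * P - S) * Y - Y * (P * S + S * P - S)
      - S * (P * Y - Y * P) - (P * Y - Y * P) * S := by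
    noncomm_ring
  rw [h, hS, hY.eq]; simp

theorem commute_commutator_of_mul_add_mul_eq (hS : P * S + S * P = S)
    (hY : P * Y + Y * P = Y) : Commute P (S * Y - Y * S) := by
  have h : P * (S * Y - Y * S) = (S * Y - Y * S) * P
      + (P * S + S * P - S) * Y + Y * (P * S + S * P - S)
      - S * (P * Y + Y * P - Y) - (P * Y + Y * P - Y) * S := by
    noncomm_ring
  rw [Commute, SemiconjBy, h, hS, hY]; simp

theorem commute_blockDiag (hP : IsIdempotentElem P) (X : R) : Commute P (blockDiag P X) := by
  have hl : P * blockDiag P X = P * X * P := by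
    simp only [blockDiag, mul_add, ← mul_assoc, hP.eq, hP.mul_one_sub_self, zero_mul, add_zero]
  have hr : blockDiag P X * P = P * X * P := by
    simp only [blockDiag, add_mul, mul_assoc, hP.eq, hP.one_sub_mul_self, mul_zero, add_zero]
  rw [Commute, SemiconjBy, hl, hr]

theorem mul_blockOffDiag_add_blockOffDiag_mul (hP : IsIdempotentElem P) (X : R) :
    P * blockOffDiag P X + blockOffDiag P X * P = blockOffDiag P X := by
  simp only [blockOffDiag, mul_add, add_mul, ← mul_assoc, hP.eq, hP.mul_one_sub_self, zero_mul]
  simp only [mul_assoc, hP.eq, hP.one_sub_mul_self, mul_zero]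
  abel

theorem blockDiag_eq_self_of_commute (hP : IsIdempotentElem P) (hY : Commute P Y) :
    blockDiag P Y = Y := by
  have hQ : Commute (1 - P) Y := (Commute.one_left Y).sub_left hY
  rw [blockDiag, hY.eq, hQ.eq, mul_assoc, mul_assoc, hP.eq, hP.one_sub.eq, ← mul_add,
    add_sub_cancel, mul_one]

theorem blockOffDiag_eq_zero_of_commute (hP : IsIdempotentElem P) (hY : Commute P Y) :
    blockOffDiag P Y = 0 := by
  have hQ : Commute (1 - P) Y := (Commute.one_left Y).sub_left hY
  rw [blockOffDiag, hY.eq, hQ.eq, mul_assoc, mul_assoc, hP.mul_one_sub_self,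
    hP.one_sub_mul_self, mul_zero, add_zero]

theorem blockDiag_eq_zero_of_mul_add_mul_eq (hP : IsIdempotentElem P)
    (hY : P * Y + Y * P = Y) : blockDiag P Y = 0 := by
  have hPYP : P * Y * P = 0 := by
    have h := congrArg (fun Z => P * Z * P) hY
    simp only [mul_add, add_mul, ← mul_assoc, hP.eq] at h
    simpa [mul_assoc, hP.eq] using h
  have hQYQ : (1 - P) * Y * (1 - P) = P * Y * P + (Y - (P * Y + Y * P)) := by noncomm_ring
  rw [blockDiag, hQYQ, hY, hPYP]; simp

theorem blockOffDiag_eq_self_of_mul_add_mul_eq (hP : IsIdempotentElem P)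
    (hY : P * Y + Y * P = Y) : blockOffDiag P Y = Y := by
  simpa [blockDiag_eq_zero_of_mul_add_mul_eq hP hY] using blockDiag_add_blockOffDiag P Y

theorem blockDiag_commutator (hP : IsIdempotentElem P) (hS : P * S + S * P = S) (X : R) :
    blockDiag P (S * X - X * S) = S * blockOffDiag P X - blockOffDiag P X * S := by
  conv_lhs => rw [← blockDiag_add_blockOffDiag P X]
  rw [mul_add, add_mul, add_sub_add_comm, blockDiag_add,
    blockDiag_eq_zero_of_mul_add_mul_eq hP
      (mul_commutator_add_commutator_mul_of_commute hS (commute_blockDiag hP X)),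
    blockDiag_eq_self_of_commute hP
      (commute_commutator_of_mul_add_mul_eq hS (mul_blockOffDiag_add_blockOffDiag_mul hP X)),
    zero_add]

theorem blockOffDiag_commutator (hP : IsIdempotentElem P) (hS : P * S + S * P = S) (X : R) :
    blockOffDiag P (S * X - X * S) = S * blockDiag P X - blockDiag P X * S := by
  conv_lhs => rw [← blockDiag_add_blockOffDiag P X]
  rw [mul_add, add_mul, add_sub_add_comm, blockOffDiag_add,
    blockOffDiag_eq_self_of_mul_add_mul_eq hP
      (mul_commutator_add_commutator_mul_of_commute hS (commute_blockDiag hP X)),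
    blockOffDiag_eq_zero_of_commute hP
      (commute_commutator_of_mul_add_mul_eq hS (mul_blockOffDiag_add_blockOffDiag_mul hP X)),
    add_zero]

end BlockDecomposition

section ContinuousBlockProjections

variable (𝕜 : Type*) {A : Type*} [NontriviallyNormedField 𝕜] [NormedRing A] [NormedAlgebra 𝕜 A]

noncomputable def blockDiagL (P : A) : A →L[𝕜] A :=
  mulLeftRight 𝕜 A P P + mulLeftRight 𝕜 A (1 - P) (1 - P)

noncomputable def blockOffDiagL (P : A) : A →L[𝕜] A :=
  mulLeftRight 𝕜 A P (1 - P) + mulLeftRight 𝕜 A (1 - P) P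

@[simp]
theorem coe_blockDiagL (P : A) : ⇑(blockDiagL 𝕜 P) = blockDiag P := rfl

@[simp]
theorem coe_blockOffDiagL (P : A) : ⇑(blockOffDiagL 𝕜 P) = blockOffDiag P := rfl

end ContinuousBlockProjections

section SwappedByIteration

variable {α : Type*} {d o f : α → α}

theorem apply_iterate_two_mul_of_swap (hdf : ∀ x, d (f x) = f (o x))
    (hof : ∀ x, o (f x) = f (d x)) (k : ℕ) (x : α) : d (f^[2 * k] x) = f^[2 * k] (d x) := by
  have hcomm : Function.Commute d f^[2] := fun y => by
    simp only [Function.iterate_succ, Function.iterate_zero, Function.comp_apply,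
      Function.id_comp, hdf, hof]
  rw [Function.iterate_mul]
  exact hcomm.iterate_right k x

theorem apply_iterate_two_mul_add_one_of_swap (hdf : ∀ x, d (f x) = f (o x))
    (hof : ∀ x, o (f x) = f (d x)) (k : ℕ) (x : α) :
    d (f^[2 * k + 1] x) = f^[2 * k + 1] (o x) := by
  rw [Function.iterate_succ_apply, apply_iterate_two_mul_of_swap hdf hof, hdf,
    Function.iterate_succ_apply]

theorem map_tsum_smul_iterate_of_swap {R M : Type*} [Semiring R] [AddCommGroup M] [Module R M]
    [UniformSpace M] [IsUniformAddGroup M] [CompleteSpace M] [T2Space M]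
    {d o : M →L[R] M} {f : M → M} (hdf : ∀ x, d (f x) = f (o x))
    (hof : ∀ x, o (f x) = f (d x)) {c : ℕ → R} (hc : ∀ y, Summable fun n => c n • f^[n] y)
    (x : M) :
    d (∑' n, c n • f^[n] x) =
      (∑' k, c (2 * k) • f^[2 * k] (d x)) + ∑' k, c (2 * k + 1) • f^[2 * k + 1] (o x) := by
  have heven : Function.Injective fun k : ℕ => 2 * k := mul_right_injective₀ two_ne_zero
  have hodd : Function.Injective fun k : ℕ => 2 * k + 1 := (add_left_injective 1).comp heven
  rw [d.map_tsum (hc x), ← tsum_even_add_odd]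
  · simp only [map_smul, apply_iterate_two_mul_of_swap hdf hof,
      apply_iterate_two_mul_add_one_of_swap hdf hof]
  · simp only [map_smul, apply_iterate_two_mul_of_swap hdf hof]
    exact (hc (d x)).comp_injective heven
  · simp only [map_smul, apply_iterate_two_mul_add_one_of_swap hdf hof]
    exact (hc (o x)).comp_injective hodd

end SwappedByIteration

theorem summable_inv_factorial_smul_iterate {𝕂 M : Type*} [RCLike 𝕂] [NormedAddCommGroup M]
    [NormedSpace 𝕂 M] [CompleteSpace M] (L : M →L[𝕂] M) (x : M) :
    Summable fun n => (n.factorial : 𝕂)⁻¹ • L^[n] x := by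
  simpa using (NormedSpace.expSeries_summable' (𝕂 := 𝕂) L).mapL (apply 𝕂 M x)

theorem stmt16_general {E : Type*} [NormedAddCommGroup E] [InnerProductSpace ℂ E]
    [FiniteDimensional ℂ E]
    (P₀ S Ham : E →L[ℂ] E)
    (hP₀idem : P₀ ∘L P₀ = P₀)
    (hSod : P₀ ∘L S ∘L P₀ = 0 ∧ (1 - P₀) ∘L S ∘L (1 - P₀) = 0)
    (adS : (E →L[ℂ] E) → (E →L[ℂ] E))
    (hadS : ∀ X, adS X = S ∘L X - X ∘L S)
    (Hd Hod : E →L[ℂ] E)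
    (hHd : Hd = P₀ ∘L Ham ∘L P₀ + (1 - P₀) ∘L Ham ∘L (1 - P₀))
    (hHod : Hod = P₀ ∘L Ham ∘L (1 - P₀) + (1 - P₀) ∘L Ham ∘L P₀)
    (T : E →L[ℂ] E)
    (hT : T = ∑' n : ℕ, ((n.factorial : ℂ))⁻¹ • adS^[n] Ham) :
    (P₀ ∘L T ∘L P₀ + (1 - P₀) ∘L T ∘L (1 - P₀) =
      (∑' k : ℕ, (((2 * k).factorial : ℂ))⁻¹ • adS^[2 * k] Hd) +
      (∑' k : ℕ, (((2 * k + 1).factorial : ℂ))⁻¹ • adS^[2 * k + 1] Hod)) ∧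
    (P₀ ∘L T ∘L (1 - P₀) + (1 - P₀) ∘L T ∘L P₀ =
      (∑' k : ℕ, (((2 * k + 1).factorial : ℂ))⁻¹ • adS^[2 * k + 1] Hd) +
      (∑' k : ℕ, (((2 * k).factorial : ℂ))⁻¹ • adS^[2 * k] Hod)) := by
  simp only [← mul_def] at hP₀idem hSod hadS hHd hHod ⊢
  have hSoff : P₀ * S + S * P₀ = S := mul_add_mul_eq_of_corners_eq_zero
    (by rw [mul_assoc]; exact hSod.1) (by rw [mul_assoc]; exact hSod.2)
  have hdiag : ∀ X, blockDiagL ℂ P₀ (adS X) = adS (blockOffDiagL ℂ P₀ X) := fun X => by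
    simpa only [coe_blockDiagL, coe_blockOffDiagL, hadS] using blockDiag_commutator hP₀idem hSoff X
  have hoff : ∀ X, blockOffDiagL ℂ P₀ (adS X) = adS (blockDiagL ℂ P₀ X) := fun X => by
    simpa only [coe_blockDiagL, coe_blockOffDiagL, hadS] using
      blockOffDiag_commutator hP₀idem hSoff X
  have hsum : ∀ Y, Summable fun n => (n.factorial : ℂ)⁻¹ • adS^[n] Y := by
    obtain rfl : adS = ⇑(mul ℂ _ S - (mul ℂ _).flip S) := funext fun X => by simp [hadS]
    exact summable_inv_factorial_smul_iterate _
  subst hT hHd hHod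
  constructor
  · simpa only [coe_blockDiagL, coe_blockOffDiagL, blockDiag, blockOffDiag, mul_assoc] using
      map_tsum_smul_iterate_of_swap hdiag hoff hsum Ham
  · have h := map_tsum_smul_iterate_of_swap hoff hdiag hsum Ham
    simp only [coe_blockDiagL, coe_blockOffDiagL, blockDiag, blockOffDiag, mul_assoc] at h
    exact h.trans (add_comm _ _)

theorem stmt16 {E : Type*} [NormedAddCommGroup E] [InnerProductSpace ℂ E]
    [FiniteDimensional ℂ E]
    (P₀ S Ham : E →L[ℂ] E)
    (hP₀ : ContinuousLinearMap.adjoint P₀ = P₀) (hP₀idem : P₀ ∘L P₀ = P₀)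
    (hS : ContinuousLinearMap.adjoint S = -S)
    (hSod : P₀ ∘L S ∘L P₀ = 0 ∧ (1 - P₀) ∘L S ∘L (1 - P₀) = 0)
    (hHam : ContinuousLinearMap.adjoint Ham = Ham)
    (adS : (E →L[ℂ] E) → (E →L[ℂ] E))
    (hadS : ∀ X, adS X = S ∘L X - X ∘L S)
    (Hd Hod : E →L[ℂ] E)
    (hHd : Hd = P₀ ∘L Ham ∘L P₀ + (1 - P₀) ∘L Ham ∘L (1 - P₀))
    (hHod : Hod = P₀ ∘L Ham ∘L (1 - P₀) + (1 - P₀) ∘L Ham ∘L P₀)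
    (T : E →L[ℂ] E)
    (hT : T = ∑' n : ℕ, ((n.factorial : ℂ))⁻¹ • adS^[n] Ham) :
    (P₀ ∘L T ∘L P₀ + (1 - P₀) ∘L T ∘L (1 - P₀) =
      (∑' k : ℕ, (((2 * k).factorial : ℂ))⁻¹ • adS^[2 * k] Hd) +
      (∑' k : ℕ, (((2 * k + 1).factorial : ℂ))⁻¹ • adS^[2 * k + 1] Hod)) ∧
    (P₀ ∘L T ∘L (1 - P₀) + (1 - P₀) ∘L T ∘L P₀ =
      (∑' k : ℕ, (((2 * k + 1).factorial : ℂ))⁻¹ • adS^[2 * k + 1] Hd) +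
      (∑' k : ℕ, (((2 * k).factorial : ℂ))⁻¹ • adS^[2 * k] Hod)) :=
  stmt16_general P₀ S Ham hP₀idem hSod adS hadS Hd Hod hHd hHod T hT
end

section
/- Local inverse of ad_{H₀}: let H₀ be positive semidefinite with ground-state projector P₀ (H₀P₀ = 0) and spectral gap Δ > 0 (H₀ ≥ Δ on range(Q₀), Q₀ = I - P₀). Define L(X) = ∫₀^∞ e^{-tH₀} Q₀ X P₀ dt - ∫₀^∞ P₀ X Q₀ e^{-tH₀} dt. Then the integrals converge, ‖L(X)‖ ≤ ‖X‖/Δ, and L([H₀, X]) = [H₀, L(X)] = P₀XQ₀ + Q₀XP₀ for every operator X. -/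
/-!
On `range (1 - P₀)` the semigroup `e^{-tH₀}` decays like `e^{-Δt}`: along `u = e^{-tH₀} y` the gap
gives `d/dt ‖u‖² = -2 Re⟪u, H₀ u⟫ ≤ -2Δ ‖u‖²`, and Grönwall applies. Since `e^{-tH₀}` fixes `P₀`,
both integrands are bounded by `‖X‖ e^{-Δt}`, so they converge and each integral has norm at most
`‖X‖ / Δ`. The first integral maps `range P₀` into `ker P₀` and kills `ker P₀`, the second does
the opposite, so by Pythagoras their difference still has norm at most `‖X‖ / Δ`. The identities
come from the fundamental theorem of calculus: `-e^{-tH₀} A` is an antiderivative of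
`e^{-tH₀} H₀ A` tending to `0` when `P₀ A = 0`, so `∫₀^∞ e^{-tH₀} H₀ A dt = A`, and symmetrically
on the right.
-/

open ContinuousLinearMap MeasureTheory
open scoped ComplexInnerProductSpace

open NormedSpace Set Filter Topology

section ComplexBanachAlgebra

variable {𝔸 : Type*} [NormedRing 𝔸] [NormedAlgebra ℂ 𝔸] [CompleteSpace 𝔸]

theorem exp_mul_eq_self_of_mul_eq_zero {a p : 𝔸} (h : a * p = 0) : exp a * p = p := by
  let := NormedAlgebra.restrictScalars ℚ ℂ 𝔸
  have := (SemiconjBy.exp_right (show SemiconjBy p 0 a by simp [SemiconjBy, h])).eq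
  rwa [exp_zero, mul_one, eq_comm] at this

theorem mul_exp_eq_self_of_mul_eq_zero {a p : 𝔸} (h : p * a = 0) : p * exp a = p := by
  let := NormedAlgebra.restrictScalars ℚ ℂ 𝔸
  simpa using (SemiconjBy.exp_right (show SemiconjBy p a 0 by simp [SemiconjBy, h])).eq

theorem hasDerivAt_exp_neg_ofReal_smul (a : 𝔸) (t : ℝ) :
    HasDerivAt (fun s : ℝ => exp ((-(s : ℂ)) • a)) (-a * exp ((-(t : ℂ)) • a)) t := by
  simp_rw [neg_smul, ← smul_neg, Complex.coe_smul]
  exact hasDerivAt_exp_smul_const' (-a) t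

theorem continuous_exp_neg_ofReal_smul (a : 𝔸) : Continuous fun s : ℝ => exp ((-(s : ℂ)) • a) :=
  continuous_iff_continuousAt.2 fun t => (hasDerivAt_exp_neg_ofReal_smul a t).continuousAt

end ComplexBanachAlgebra

section ExponentialDecay

variable {E : Type*} [NormedAddCommGroup E] {f : ℝ → E} {C Δ : ℝ}

theorem integrableOn_Ioi_of_norm_le_exp (hΔ : 0 < Δ)
    (hf : AEStronglyMeasurable f (volume.restrict (Ioi 0)))
    (hle : ∀ t ∈ Ioi (0 : ℝ), ‖f t‖ ≤ C * Real.exp (-Δ * t)) :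
    IntegrableOn f (Ioi 0) :=
  ((exp_neg_integrableOn_Ioi 0 hΔ).const_mul C).mono' hf
    ((ae_restrict_iff' measurableSet_Ioi).2 (ae_of_all _ hle))

theorem norm_setIntegral_Ioi_le_of_norm_le_exp [NormedSpace ℝ E] (hΔ : 0 < Δ)
    (hle : ∀ t ∈ Ioi (0 : ℝ), ‖f t‖ ≤ C * Real.exp (-Δ * t)) :
    ‖∫ t in Ioi 0, f t‖ ≤ C / Δ := by
  have hint : ∫ t in Ioi (0 : ℝ), C * Real.exp (-Δ * t) = C / Δ := by
    rw [integral_const_mul, integral_exp_mul_Ioi (neg_lt_zero.2 hΔ)]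
    simp [div_eq_mul_inv]
  rw [← hint]
  exact norm_integral_le_of_norm_le ((exp_neg_integrableOn_Ioi 0 hΔ).const_mul C)
    ((ae_restrict_iff' measurableSet_Ioi).2 (ae_of_all _ hle))

theorem tendsto_zero_of_norm_le_exp (hΔ : 0 < Δ)
    (hle : ∀ t ∈ Ioi (0 : ℝ), ‖f t‖ ≤ C * Real.exp (-Δ * t)) : Tendsto f atTop (𝓝 0) := by
  refine squeeze_zero_norm' ((eventually_gt_atTop 0).mono hle) ?_
  simpa using (Real.tendsto_exp_atBot.comp
    (tendsto_id.const_mul_atTop_of_neg (neg_neg_iff_pos.2 hΔ))).const_mul C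

end ExponentialDecay

section Dissipative

variable {E : Type*} [NormedAddCommGroup E] [InnerProductSpace ℂ E]

theorem norm_le_exp_mul_norm_of_re_inner_deriv_le {u u' : ℝ → E} {Δ t : ℝ}
    (hu : ∀ s ∈ Ici (0 : ℝ), HasDerivAt u (u' s) s)
    (hdiss : ∀ s ∈ Ici (0 : ℝ), (⟪u s, u' s⟫).re ≤ -Δ * ‖u s‖ ^ 2) (ht : 0 ≤ t) :
    ‖u t‖ ≤ Real.exp (-Δ * t) * ‖u 0‖ := by
  let := InnerProductSpace.complexToReal (G := E)
  have hderiv : ∀ s ∈ Ici (0 : ℝ), HasDerivAt (‖u ·‖ ^ 2) (2 * (⟪u s, u' s⟫).re) s :=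
    fun s hs => by simpa [real_inner_eq_re_inner] using (hu s hs).norm_sq
  have hsq := le_gronwallBound_of_liminf_deriv_right_le (f := (‖u ·‖ ^ 2)) (δ := ‖u 0‖ ^ 2)
    (K := -2 * Δ) (ε := 0) (a := 0) (b := t)
    (fun s hs => (hderiv s hs.1).continuousAt.continuousWithinAt)
    (fun s hs r hr => (hderiv s hs.1).hasDerivWithinAt.liminf_right_slope_le hr) le_rfl
    (fun s hs => by linarith [hdiss s hs.1]) t ⟨ht, le_rfl⟩
  rw [gronwallBound_ε0, sub_zero] at hsq
  refine (pow_le_pow_iff_left₀ (norm_nonneg _) (by positivity) two_ne_zero).1 ?_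
  calc ‖u t‖ ^ 2 ≤ ‖u 0‖ ^ 2 * Real.exp (-2 * Δ * t) := hsq
    _ = (Real.exp (-Δ * t) * ‖u 0‖) ^ 2 := by
      rw [mul_pow, ← Real.exp_nat_mul]; ring_nf

end Dissipative

section StarProjection

variable {𝕜 E : Type*} [RCLike 𝕜] [NormedAddCommGroup E] [InnerProductSpace 𝕜 E] [CompleteSpace E]
  {p : E →L[𝕜] E}

theorem IsStarProjection.norm_sq_apply_add_norm_sq_one_sub_apply (hp : IsStarProjection p)
    (x : E) : ‖p x‖ ^ 2 + ‖(1 - p) x‖ ^ 2 = ‖x‖ ^ 2 := by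
  obtain ⟨K, _, rfl⟩ := isStarProjection_iff_eq_starProjection.mp hp
  rw [← Submodule.starProjection_orthogonal', Submodule.norm_sq_eq_add_norm_sq_starProjection x K]

theorem norm_mul_mul_le_of_isStarProjection {p q : E →L[𝕜] E} (hp : IsStarProjection p)
    (hq : IsStarProjection q) (X : E →L[𝕜] E) : ‖p * (X * q)‖ ≤ ‖X‖ :=
  calc ‖p * (X * q)‖ ≤ ‖p‖ * (‖X‖ * ‖q‖) :=
        (norm_mul_le _ _).trans (by gcongr; exact norm_mul_le _ _)
    _ ≤ 1 * (‖X‖ * 1) := by gcongr; exacts [hp.norm_le, hq.norm_le]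
    _ = ‖X‖ := by ring

theorem IsStarProjection.norm_sub_le_of_offDiag {S T : E →L[𝕜] E} (hp : IsStarProjection p)
    (hpS : p * S = 0) (hSp : S * p = S) (hpT : p * T = T) (hTp : T * p = 0) {c : ℝ}
    (hS : ‖S‖ ≤ c) (hT : ‖T‖ ≤ c) : ‖S - T‖ ≤ c := by
  have hc : 0 ≤ c := (norm_nonneg S).trans hS
  refine opNorm_le_bound _ hc fun v => ?_
  have hSv : ‖S v‖ ≤ c * ‖p v‖ := by
    rw [← hSp, mul_apply_eq_comp]; exact S.le_of_opNorm_le hS _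
  have hTv : ‖T v‖ ≤ c * ‖(1 - p) v‖ := by
    rw [← sub_zero T, ← hTp, ← mul_one_sub, mul_apply_eq_comp]; exact T.le_of_opNorm_le hT _
  have hsplit : ‖(S - T) v‖ ^ 2 = ‖S v‖ ^ 2 + ‖T v‖ ^ 2 := by
    have hp_apply : p ((S - T) v) = -T v := by
      rw [← mul_apply_eq_comp, mul_sub, hpS, hpT, zero_sub, neg_apply]
    have hq_apply : (1 - p) ((S - T) v) = S v := by
      rw [← mul_apply_eq_comp, sub_mul, one_mul, mul_sub, hpS, hpT]; simp
    rw [← hp.norm_sq_apply_add_norm_sq_one_sub_apply, hp_apply, hq_apply, norm_neg, add_comm]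
  refine (pow_le_pow_iff_left₀ (norm_nonneg _) (by positivity) two_ne_zero).1 ?_
  calc ‖(S - T) v‖ ^ 2 = ‖S v‖ ^ 2 + ‖T v‖ ^ 2 := hsplit
    _ ≤ (c * ‖p v‖) ^ 2 + (c * ‖(1 - p) v‖) ^ 2 := by gcongr
    _ = (c * ‖v‖) ^ 2 := by
        rw [mul_pow, mul_pow, ← mul_add, hp.norm_sq_apply_add_norm_sq_one_sub_apply, mul_pow]

end StarProjection

section GroundStateGap

variable {H : Type*} [NormedAddCommGroup H] [InnerProductSpace ℂ H] [CompleteSpace H]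

structure HasGroundStateGap (H₀ P₀ : H →L[ℂ] H) (Δ : ℝ) : Prop where
  pos : 0 < Δ
  isStarProjection : IsStarProjection P₀
  mul_proj : H₀ * P₀ = 0
  proj_mul : P₀ * H₀ = 0
  gap : ∀ x : H, P₀ x = 0 → Δ * ‖x‖ ^ 2 ≤ (⟪x, H₀ x⟫).re

namespace HasGroundStateGap

variable {H₀ P₀ : H →L[ℂ] H} {Δ : ℝ}

theorem of_isSelfAdjoint (hH₀ : IsSelfAdjoint H₀) (hP₀ : IsStarProjection P₀)
    (hker : ∀ x, P₀ x = x → H₀ x = 0) (hΔ : 0 < Δ)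
    (hgap : ∀ x : H, P₀ x = 0 → Δ * ‖x‖ ^ 2 ≤ (⟪x, H₀ x⟫).re) : HasGroundStateGap H₀ P₀ Δ := by
  have hH₀P₀ : H₀ * P₀ = 0 := ext fun v => hker _ congr($(hP₀.isIdempotentElem.eq) v)
  refine ⟨hΔ, hP₀, hH₀P₀, ?_, hgap⟩
  rw [← hP₀.isSelfAdjoint.star_eq, ← hH₀.star_eq, ← star_mul, hH₀P₀, star_zero]

theorem exp_mul_proj (h : HasGroundStateGap H₀ P₀ Δ) (c : ℂ) : exp (c • H₀) * P₀ = P₀ :=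
  exp_mul_eq_self_of_mul_eq_zero (by rw [smul_mul_assoc, h.mul_proj, smul_zero])

theorem proj_mul_exp (h : HasGroundStateGap H₀ P₀ Δ) (c : ℂ) : P₀ * exp (c • H₀) = P₀ :=
  mul_exp_eq_self_of_mul_eq_zero (by rw [mul_smul_comm, h.proj_mul, smul_zero])

theorem norm_exp_apply_le (h : HasGroundStateGap H₀ P₀ Δ) {y : H} (hy : P₀ y = 0) {t : ℝ}
    (ht : 0 ≤ t) : ‖exp ((-(t : ℂ)) • H₀) y‖ ≤ Real.exp (-Δ * t) * ‖y‖ := by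
  have hPy : ∀ s : ℝ, P₀ (exp ((-(s : ℂ)) • H₀) y) = 0 := fun s => by
    rw [← mul_apply_eq_comp, h.proj_mul_exp, hy]
  simpa using norm_le_exp_mul_norm_of_re_inner_deriv_le
    (u := fun s : ℝ => exp ((-(s : ℂ)) • H₀) y) (u' := fun s => -H₀ (exp ((-(s : ℂ)) • H₀) y))
    (fun s _ => ((apply ℂ H y).restrictScalars ℝ).hasFDerivAt.comp_hasDerivAt s
      (hasDerivAt_exp_neg_ofReal_smul H₀ s))
    (fun s _ => by simpa [inner_neg_right] using h.gap _ (hPy s)) ht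

theorem norm_exp_mul_one_sub_proj_le (h : HasGroundStateGap H₀ P₀ Δ) {t : ℝ} (ht : 0 ≤ t) :
    ‖exp ((-(t : ℂ)) • H₀) * (1 - P₀)‖ ≤ Real.exp (-Δ * t) := by
  refine opNorm_le_bound _ (Real.exp_nonneg _) fun v => ?_
  have hPv : P₀ ((1 - P₀) v) = 0 := by
    rw [← mul_apply_eq_comp, h.isStarProjection.mul_one_sub_self, zero_apply]
  calc ‖(exp ((-(t : ℂ)) • H₀) * (1 - P₀)) v‖ ≤ Real.exp (-Δ * t) * ‖(1 - P₀) v‖ :=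
        h.norm_exp_apply_le hPv ht
    _ ≤ Real.exp (-Δ * t) * ‖v‖ := by
        gcongr
        simpa using (1 - P₀).le_of_opNorm_le h.isStarProjection.one_sub.norm_le v

theorem norm_exp_mul_le (h : HasGroundStateGap H₀ P₀ Δ) {A : H →L[ℂ] H} (hA : P₀ * A = 0) {t : ℝ}
    (ht : 0 ≤ t) : ‖exp ((-(t : ℂ)) • H₀) * A‖ ≤ ‖A‖ * Real.exp (-Δ * t) :=
  calc ‖exp ((-(t : ℂ)) • H₀) * A‖ = ‖exp ((-(t : ℂ)) • H₀) * (1 - P₀) * A‖ := by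
        rw [mul_assoc, sub_mul, one_mul, hA, sub_zero]
    _ ≤ ‖A‖ * Real.exp (-Δ * t) := by
        rw [mul_comm ‖A‖]
        exact norm_mul_le_of_le (h.norm_exp_mul_one_sub_proj_le ht) le_rfl

theorem norm_mul_exp_le (h : HasGroundStateGap H₀ P₀ Δ) {B : H →L[ℂ] H} (hB : B * P₀ = 0) {t : ℝ}
    (ht : 0 ≤ t) : ‖B * exp ((-(t : ℂ)) • H₀)‖ ≤ ‖B‖ * Real.exp (-Δ * t) :=
  calc ‖B * exp ((-(t : ℂ)) • H₀)‖ = ‖B * (exp ((-(t : ℂ)) • H₀) * (1 - P₀))‖ := by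
        rw [mul_one_sub, h.exp_mul_proj, mul_sub, hB, sub_zero]
    _ ≤ ‖B‖ * Real.exp (-Δ * t) := norm_mul_le_of_le le_rfl (h.norm_exp_mul_one_sub_proj_le ht)

theorem integrableOn_exp_mul (h : HasGroundStateGap H₀ P₀ Δ) {A : H →L[ℂ] H} (hA : P₀ * A = 0) :
    IntegrableOn (fun t : ℝ => exp ((-(t : ℂ)) • H₀) * A) (Ioi 0) :=
  integrableOn_Ioi_of_norm_le_exp h.pos
    ((continuous_exp_neg_ofReal_smul H₀).mul continuous_const).aestronglyMeasurable
    fun _ ht => h.norm_exp_mul_le hA (le_of_lt ht)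

theorem integrableOn_mul_exp (h : HasGroundStateGap H₀ P₀ Δ) {B : H →L[ℂ] H} (hB : B * P₀ = 0) :
    IntegrableOn (fun t : ℝ => B * exp ((-(t : ℂ)) • H₀)) (Ioi 0) :=
  integrableOn_Ioi_of_norm_le_exp h.pos
    (continuous_const.mul (continuous_exp_neg_ofReal_smul H₀)).aestronglyMeasurable
    fun _ ht => h.norm_mul_exp_le hB (le_of_lt ht)

theorem setIntegral_exp_mul_mul_eq (h : HasGroundStateGap H₀ P₀ Δ) {A : H →L[ℂ] H}
    (hA : P₀ * A = 0) : ∫ t in Ioi (0 : ℝ), exp ((-(t : ℂ)) • H₀) * (H₀ * A) = A := by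
  have hderiv : ∀ t ∈ Ici (0 : ℝ), HasDerivAt (fun s : ℝ => -(exp ((-(s : ℂ)) • H₀) * A))
      (exp ((-(t : ℂ)) • H₀) * (H₀ * A)) t := fun t _ => by
    have := ((hasDerivAt_exp_neg_ofReal_smul H₀ t).mul_const A).neg
    rwa [neg_mul, neg_mul, neg_neg, ((Commute.refl H₀).smul_right _).exp_right.eq, mul_assoc]
      at this
  have hlim := tendsto_zero_of_norm_le_exp (f := fun s : ℝ => -(exp ((-(s : ℂ)) • H₀) * A))
    h.pos fun t ht => by simpa only [norm_neg] using h.norm_exp_mul_le hA (le_of_lt ht)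
  have hint := h.integrableOn_exp_mul (A := H₀ * A) (by rw [← mul_assoc, h.proj_mul, zero_mul])
  simpa [exp_zero] using integral_Ioi_of_hasDerivAt_of_tendsto' hderiv hint hlim

theorem setIntegral_mul_mul_exp_eq (h : HasGroundStateGap H₀ P₀ Δ) {B : H →L[ℂ] H}
    (hB : B * P₀ = 0) : ∫ t in Ioi (0 : ℝ), B * H₀ * exp ((-(t : ℂ)) • H₀) = B := by
  have hderiv : ∀ t ∈ Ici (0 : ℝ), HasDerivAt (fun s : ℝ => B * exp ((-(s : ℂ)) • H₀))
      (-(B * H₀ * exp ((-(t : ℂ)) • H₀))) t := fun t _ => by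
    simpa only [mul_neg, neg_mul, mul_assoc] using (hasDerivAt_exp_neg_ofReal_smul H₀ t).const_mul B
  have hlim := tendsto_zero_of_norm_le_exp h.pos fun t ht => h.norm_mul_exp_le hB (le_of_lt ht)
  have hint := (h.integrableOn_mul_exp (B := B * H₀) (by rw [mul_assoc, h.mul_proj, mul_zero])).neg
  simpa [exp_zero, integral_neg] using integral_Ioi_of_hasDerivAt_of_tendsto' hderiv hint hlim

theorem proj_mul_setIntegral_exp_mul (h : HasGroundStateGap H₀ P₀ Δ) {A : H →L[ℂ] H}
    (hA : P₀ * A = 0) : P₀ * ∫ t in Ioi (0 : ℝ), exp ((-(t : ℂ)) • H₀) * A = 0 := by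
  rw [← integral_const_mul_of_integrable (h.integrableOn_exp_mul hA)]
  simp_rw [← mul_assoc, h.proj_mul_exp, hA, integral_zero]

theorem mul_setIntegral_exp_mul_eq (h : HasGroundStateGap H₀ P₀ Δ) {A : H →L[ℂ] H}
    (hA : P₀ * A = 0) : H₀ * ∫ t in Ioi (0 : ℝ), exp ((-(t : ℂ)) • H₀) * A = A := by
  rw [← integral_const_mul_of_integrable (h.integrableOn_exp_mul hA)]
  simp_rw [← mul_assoc, ((Commute.refl H₀).smul_right _).exp_right.eq, mul_assoc]
  exact h.setIntegral_exp_mul_mul_eq hA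

theorem setIntegral_exp_mul_mul (h : HasGroundStateGap H₀ P₀ Δ) {A : H →L[ℂ] H}
    (hA : P₀ * A = 0) (C : H →L[ℂ] H) :
    (∫ t in Ioi (0 : ℝ), exp ((-(t : ℂ)) • H₀) * A) * C =
      ∫ t in Ioi (0 : ℝ), exp ((-(t : ℂ)) • H₀) * (A * C) := by
  rw [← integral_mul_const_of_integrable (h.integrableOn_exp_mul hA)]
  simp_rw [mul_assoc]

theorem norm_setIntegral_exp_mul_le (h : HasGroundStateGap H₀ P₀ Δ) {A : H →L[ℂ] H}
    (hA : P₀ * A = 0) : ‖∫ t in Ioi (0 : ℝ), exp ((-(t : ℂ)) • H₀) * A‖ ≤ ‖A‖ / Δ :=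
  norm_setIntegral_Ioi_le_of_norm_le_exp h.pos fun _ ht => h.norm_exp_mul_le hA (le_of_lt ht)

theorem setIntegral_mul_exp_mul_proj (h : HasGroundStateGap H₀ P₀ Δ) {B : H →L[ℂ] H}
    (hB : B * P₀ = 0) : (∫ t in Ioi (0 : ℝ), B * exp ((-(t : ℂ)) • H₀)) * P₀ = 0 := by
  rw [← integral_mul_const_of_integrable (h.integrableOn_mul_exp hB)]
  simp_rw [mul_assoc, h.exp_mul_proj, hB, integral_zero]

theorem setIntegral_mul_exp_mul_eq (h : HasGroundStateGap H₀ P₀ Δ) {B : H →L[ℂ] H}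
    (hB : B * P₀ = 0) : (∫ t in Ioi (0 : ℝ), B * exp ((-(t : ℂ)) • H₀)) * H₀ = B := by
  rw [← integral_mul_const_of_integrable (h.integrableOn_mul_exp hB)]
  simp_rw [mul_assoc, ← ((Commute.refl H₀).smul_right _).exp_right.eq, ← mul_assoc]
  exact h.setIntegral_mul_mul_exp_eq hB

theorem mul_setIntegral_mul_exp (h : HasGroundStateGap H₀ P₀ Δ) {B : H →L[ℂ] H}
    (hB : B * P₀ = 0) (C : H →L[ℂ] H) :
    C * (∫ t in Ioi (0 : ℝ), B * exp ((-(t : ℂ)) • H₀)) =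
      ∫ t in Ioi (0 : ℝ), C * B * exp ((-(t : ℂ)) • H₀) := by
  rw [← integral_const_mul_of_integrable (h.integrableOn_mul_exp hB)]
  simp_rw [mul_assoc]

theorem norm_setIntegral_mul_exp_le (h : HasGroundStateGap H₀ P₀ Δ) {B : H →L[ℂ] H}
    (hB : B * P₀ = 0) : ‖∫ t in Ioi (0 : ℝ), B * exp ((-(t : ℂ)) • H₀)‖ ≤ ‖B‖ / Δ :=
  norm_setIntegral_Ioi_le_of_norm_le_exp h.pos fun _ ht => h.norm_mul_exp_le hB (le_of_lt ht)

theorem norm_setIntegral_sub_le (h : HasGroundStateGap H₀ P₀ Δ) {A B : H →L[ℂ] H}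
    (hPA : P₀ * A = 0) (hAP : A * P₀ = A) (hPB : P₀ * B = B) (hBP : B * P₀ = 0) {c : ℝ}
    (hA : ‖A‖ ≤ c) (hB : ‖B‖ ≤ c) :
    ‖(∫ t in Ioi (0 : ℝ), exp ((-(t : ℂ)) • H₀) * A) -
      ∫ t in Ioi (0 : ℝ), B * exp ((-(t : ℂ)) • H₀)‖ ≤ c / Δ := by
  refine h.isStarProjection.norm_sub_le_of_offDiag (h.proj_mul_setIntegral_exp_mul hPA) ?_ ?_
    (h.setIntegral_mul_exp_mul_proj hBP) ?_ ?_
  · rw [h.setIntegral_exp_mul_mul hPA, hAP]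
  · simp_rw [h.mul_setIntegral_mul_exp hBP, hPB]
  · exact (h.norm_setIntegral_exp_mul_le hPA).trans (div_le_div_of_nonneg_right hA h.pos.le)
  · exact (h.norm_setIntegral_mul_exp_le hBP).trans (div_le_div_of_nonneg_right hB h.pos.le)

theorem commutator_setIntegral_sub (h : HasGroundStateGap H₀ P₀ Δ) {A B : H →L[ℂ] H}
    (hPA : P₀ * A = 0) (hAH : A * H₀ = 0) (hBP : B * P₀ = 0) (hHB : H₀ * B = 0) :
    H₀ * ((∫ t in Ioi (0 : ℝ), exp ((-(t : ℂ)) • H₀) * A) -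
        ∫ t in Ioi (0 : ℝ), B * exp ((-(t : ℂ)) • H₀)) -
      ((∫ t in Ioi (0 : ℝ), exp ((-(t : ℂ)) • H₀) * A) -
        ∫ t in Ioi (0 : ℝ), B * exp ((-(t : ℂ)) • H₀)) * H₀ = A + B := by
  rw [mul_sub, sub_mul, h.mul_setIntegral_exp_mul_eq hPA, h.setIntegral_mul_exp_mul_eq hBP,
    h.mul_setIntegral_mul_exp hBP, h.setIntegral_exp_mul_mul hPA, hAH, hHB]
  simp

theorem one_sub_proj_mul_commutator_mul_proj (h : HasGroundStateGap H₀ P₀ Δ) (X : H →L[ℂ] H) :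
    (1 - P₀) * ((H₀ * X - X * H₀) * P₀) = H₀ * ((1 - P₀) * (X * P₀)) := by
  have h₁ : ∀ Y, H₀ * (P₀ * Y) = 0 := fun Y => by rw [← mul_assoc, h.mul_proj, zero_mul]
  have h₂ : ∀ Y, P₀ * (H₀ * Y) = 0 := fun Y => by rw [← mul_assoc, h.proj_mul, zero_mul]
  simp [mul_sub, sub_mul, mul_assoc, h.mul_proj, h₁, h₂]

theorem proj_mul_commutator_mul_one_sub_proj (h : HasGroundStateGap H₀ P₀ Δ) (X : H →L[ℂ] H) :
    P₀ * ((H₀ * X - X * H₀) * (1 - P₀)) = -(P₀ * (X * (1 - P₀)) * H₀) := by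
  have h₂ : ∀ Y, P₀ * (H₀ * Y) = 0 := fun Y => by rw [← mul_assoc, h.proj_mul, zero_mul]
  simp [mul_sub, sub_mul, mul_assoc, h.mul_proj, h.proj_mul, h₂]

end HasGroundStateGap

end GroundStateGap

theorem stmt18_general {H : Type*} [NormedAddCommGroup H] [InnerProductSpace ℂ H]
    [FiniteDimensional ℂ H]
    (H₀ P₀ : H →L[ℂ] H)
    (hH₀sa : ContinuousLinearMap.adjoint H₀ = H₀)
    (hP₀ : ContinuousLinearMap.adjoint P₀ = P₀) (hP₀idem : P₀ ∘L P₀ = P₀)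
    (hker : ∀ x : H, H₀ x = 0 ↔ P₀ x = x)
    (Δ : ℝ) (hΔ : 0 < Δ)
    (hgap : ∀ x : H, P₀ x = 0 → Δ * ‖x‖ ^ 2 ≤ ((⟪x, H₀ x⟫ : ℂ)).re)
    (L : (H →L[ℂ] H) → (H →L[ℂ] H))
    (hL : ∀ X, L X =
      (∫ t in Set.Ioi (0 : ℝ),
        (NormedSpace.exp ((-(t : ℂ)) • H₀) ∘L ((1 - P₀) ∘L X ∘L P₀))) -
      (∫ t in Set.Ioi (0 : ℝ),
        ((P₀ ∘L X ∘L (1 - P₀)) ∘L NormedSpace.exp ((-(t : ℂ)) • H₀)))) :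
    ∀ X : H →L[ℂ] H,
      IntegrableOn (fun t : ℝ =>
        NormedSpace.exp ((-(t : ℂ)) • H₀) ∘L ((1 - P₀) ∘L X ∘L P₀))
        (Set.Ioi 0) ∧
      IntegrableOn (fun t : ℝ =>
        (P₀ ∘L X ∘L (1 - P₀)) ∘L NormedSpace.exp ((-(t : ℂ)) • H₀))
        (Set.Ioi 0) ∧
      ‖L X‖ ≤ ‖X‖ / Δ ∧
      L (H₀ ∘L X - X ∘L H₀) = H₀ ∘L L X - L X ∘L H₀ ∧
      L (H₀ ∘L X - X ∘L H₀) = P₀ ∘L X ∘L (1 - P₀) + (1 - P₀) ∘L X ∘L P₀ := by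
  intro X
  simp only [← mul_def] at hL ⊢
  have h := HasGroundStateGap.of_isSelfAdjoint hH₀sa ⟨hP₀idem, hP₀⟩ (fun x => (hker x).2) hΔ hgap
  have hp := h.isStarProjection
  set A := (1 - P₀) * (X * P₀) with hA
  set B := P₀ * (X * (1 - P₀)) with hB
  have hPA : P₀ * A = 0 := by rw [← mul_assoc, hp.mul_one_sub_self, zero_mul]
  have hAP : A * P₀ = A := by rw [mul_assoc, mul_assoc, hp.isIdempotentElem.eq]
  have hAH : A * H₀ = 0 := by rw [mul_assoc, mul_assoc, h.proj_mul, mul_zero, mul_zero]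
  have hBP : B * P₀ = 0 := by rw [mul_assoc, mul_assoc, hp.one_sub_mul_self, mul_zero, mul_zero]
  have hPB : P₀ * B = B := by rw [← mul_assoc, hp.isIdempotentElem.eq]
  have hHB : H₀ * B = 0 := by rw [← mul_assoc, h.mul_proj, zero_mul]
  have hLX : L X = (∫ t in Ioi (0 : ℝ), exp ((-(t : ℂ)) • H₀) * A) -
      ∫ t in Ioi (0 : ℝ), B * exp ((-(t : ℂ)) • H₀) := hL X
  have hLcomm : L (H₀ * X - X * H₀) = A + B := by
    rw [hL, h.one_sub_proj_mul_commutator_mul_proj, h.proj_mul_commutator_mul_one_sub_proj, ← hA,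
      ← hB]
    simp_rw [neg_mul, integral_neg, h.setIntegral_exp_mul_mul_eq hPA,
      h.setIntegral_mul_mul_exp_eq hBP, sub_neg_eq_add]
  refine ⟨h.integrableOn_exp_mul hPA, h.integrableOn_mul_exp hBP, ?_, ?_,
    hLcomm.trans (add_comm _ _)⟩
  · rw [hLX]
    exact h.norm_setIntegral_sub_le hPA hAP hPB hBP
      (norm_mul_mul_le_of_isStarProjection hp.one_sub hp X)
      (norm_mul_mul_le_of_isStarProjection hp hp.one_sub X)
  · rw [hLcomm, hLX, h.commutator_setIntegral_sub hPA hAH hBP hHB]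

theorem stmt18 {H : Type*} [NormedAddCommGroup H] [InnerProductSpace ℂ H]
    [FiniteDimensional ℂ H]
    (H₀ P₀ : H →L[ℂ] H)
    (hH₀sa : ContinuousLinearMap.adjoint H₀ = H₀)
    (hH₀pos : ∀ x : H, 0 ≤ ((⟪x, H₀ x⟫ : ℂ)).re)
    (hP₀ : ContinuousLinearMap.adjoint P₀ = P₀) (hP₀idem : P₀ ∘L P₀ = P₀)
    (hker : ∀ x : H, H₀ x = 0 ↔ P₀ x = x)
    (Δ : ℝ) (hΔ : 0 < Δ)
    (hgap : ∀ x : H, P₀ x = 0 → Δ * ‖x‖ ^ 2 ≤ ((⟪x, H₀ x⟫ : ℂ)).re)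
    (L : (H →L[ℂ] H) → (H →L[ℂ] H))
    (hL : ∀ X, L X =
      (∫ t in Set.Ioi (0 : ℝ),
        (NormedSpace.exp ((-(t : ℂ)) • H₀) ∘L ((1 - P₀) ∘L X ∘L P₀))) -
      (∫ t in Set.Ioi (0 : ℝ),
        ((P₀ ∘L X ∘L (1 - P₀)) ∘L NormedSpace.exp ((-(t : ℂ)) • H₀)))) :
    ∀ X : H →L[ℂ] H,
      IntegrableOn (fun t : ℝ =>
        NormedSpace.exp ((-(t : ℂ)) • H₀) ∘L ((1 - P₀) ∘L X ∘L P₀))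
        (Set.Ioi 0) ∧
      IntegrableOn (fun t : ℝ =>
        (P₀ ∘L X ∘L (1 - P₀)) ∘L NormedSpace.exp ((-(t : ℂ)) • H₀))
        (Set.Ioi 0) ∧
      ‖L X‖ ≤ ‖X‖ / Δ ∧
      L (H₀ ∘L X - X ∘L H₀) = H₀ ∘L L X - L X ∘L H₀ ∧
      L (H₀ ∘L X - X ∘L H₀) = P₀ ∘L X ∘L (1 - P₀) + (1 - P₀) ∘L X ∘L P₀ :=
  stmt18_general H₀ P₀ hH₀sa hP₀ hP₀idem hker Δ hΔ hgap L hL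
end
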